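/- Let {z^t} be the sequence produced by ExRM+ with stepsize η ∈ (0, 1/L_F). Then: (1) lim_{t→∞} ‖z^t − z^{t+1}‖ = 0; (2) every limit point ẑ of {z^t} (i.e., every limit of a convergent subsequence) belongs to SOL(Z_≥, F), and hence g(ẑ) is a Nash equilibrium; (3) lim_{t→∞} DualGap(g(z^t)) = 0. -/

import Mathlib

open scoped BigOperators RealInnerProductSpace
open Filter Topology

noncomputable section

abbrev Vec (d : ℕ) := EuclideanSpace ℝ (Fin d)
abbrev Joint (d1 d2 : ℕ) := EuclideanSpace ℝ (Fin d1 ⊕ Fin d2)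

/-- First block of a joint vector. -/
def xPart {d1 d2 : ℕ} (z : Joint d1 d2) : Vec d1 := WithLp.toLp 2 (fun i => z (Sum.inl i))

/-- Second block of a joint vector. -/
def yPart {d1 d2 : ℕ} (z : Joint d1 d2) : Vec d2 := WithLp.toLp 2 (fun j => z (Sum.inr j))

/-- Assemble a joint vector from its two blocks. -/
def joinPt {d1 d2 : ℕ} (x : Vec d1) (y : Vec d2) : Joint d1 d2 :=
  WithLp.toLp 2 (fun s => Sum.elim (fun i => x i) (fun j => y j) s)

/-- The probability simplex Δ^d. -/
def simplexSet (d : ℕ) : Set (Vec d) := {x | (∀ i, 0 ≤ x i) ∧ ∑ i, x i = 1}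

/-- The clipped positive orthant Δ^d_≥. -/
def clippedSet (d : ℕ) : Set (Vec d) := {u | (∀ i, 0 ≤ u i) ∧ 1 ≤ ∑ i, u i}

/-- Z = Δ^{d1} × Δ^{d2}, as a subset of the joint Euclidean space. -/
def Zset (d1 d2 : ℕ) : Set (Joint d1 d2) :=
  {z | xPart z ∈ simplexSet d1 ∧ yPart z ∈ simplexSet d2}

/-- Z_≥ = Δ^{d1}_≥ × Δ^{d2}_≥. -/
def ZgeSet (d1 d2 : ℕ) : Set (Joint d1 d2) :=
  {z | xPart z ∈ clippedSet d1 ∧ yPart z ∈ clippedSet d2}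

/-- Bilinear payoff xᵀ A y. -/
def payoff {d1 d2 : ℕ} (A : Matrix (Fin d1) (Fin d2) ℝ) (x : Vec d1) (y : Vec d2) : ℝ :=
  ∑ i, ∑ j, x i * A i j * y j

/-- Duality gap of a pair of strategies. -/
def dualGap {d1 d2 : ℕ} (A : Matrix (Fin d1) (Fin d2) ℝ) (x : Vec d1) (y : Vec d2) : ℝ :=
  sSup ((fun y' => payoff A x y') '' simplexSet d2) -
    sInf ((fun x' => payoff A x' y) '' simplexSet d1)

/-- Nash equilibrium: a feasible pair with zero duality gap. -/
def IsNash {d1 d2 : ℕ} (A : Matrix (Fin d1) (Fin d2) ℝ) (x : Vec d1) (y : Vec d2) : Prop :=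
  x ∈ simplexSet d1 ∧ y ∈ simplexSet d2 ∧ dualGap A x y = 0

/-- Strict Nash equilibrium: unique best responses on both sides. -/
def IsStrictNash {d1 d2 : ℕ} (A : Matrix (Fin d1) (Fin d2) ℝ)
    (xs : Vec d1) (ys : Vec d2) : Prop :=
  IsNash A xs ys ∧
  (∀ x ∈ simplexSet d1, x ≠ xs → payoff A xs ys < payoff A x ys) ∧
  (∀ y ∈ simplexSet d2, y ≠ ys → payoff A xs y < payoff A xs ys)

/-- ℓ₁ normalization of a block. -/
def normPart {d : ℕ} (u : Vec d) : Vec d := (∑ i, |u i|)⁻¹ • u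

/-- ℓ₁ normalization with the convention 0/0 = (1/d)·1. -/
def normPart0 {d : ℕ} (u : Vec d) : Vec d :=
  if (∑ i, |u i|) = 0 then (WithLp.toLp 2 (fun _ => (d : ℝ)⁻¹)) else (∑ i, |u i|)⁻¹ • u

/-- The normalization operator g. -/
def gNorm {d1 d2 : ℕ} (z : Joint d1 d2) : Joint d1 d2 :=
  joinPt (normPart (xPart z)) (normPart (yPart z))

/-- The regret operator F. -/
def Fop {d1 d2 : ℕ} (A : Matrix (Fin d1) (Fin d2) ℝ) (z : Joint d1 d2) : Joint d1 d2 :=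
  joinPt
    (WithLp.toLp 2 (fun i => (∑ j, A i j * normPart (yPart z) j) -
      payoff A (normPart (xPart z)) (normPart (yPart z))))
    (WithLp.toLp 2 (fun j => -(∑ i, A i j * normPart (xPart z) i) +
      payoff A (normPart (xPart z)) (normPart (yPart z))))

/-- Spectral (ℓ₂ operator) norm of a matrix. -/
def opNorm {d1 d2 : ℕ} (A : Matrix (Fin d1) (Fin d2) ℝ) : ℝ :=
  ‖LinearMap.toContinuousLinearMap (Matrix.toEuclideanLin A)‖

/-- Lipschitz constant L_F = √6 ‖A‖_op max{d1,d2}. -/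
def LF {d1 d2 : ℕ} (A : Matrix (Fin d1) (Fin d2) ℝ) : ℝ :=
  Real.sqrt 6 * opNorm A * max (d1 : ℝ) (d2 : ℝ)

open Classical in
/-- Euclidean (metric) projection onto a set: the distance minimizer, when it exists. -/
def projOn {E : Type*} [NormedAddCommGroup E] [InnerProductSpace ℝ E]
    (S : Set E) (u : E) : E :=
  if h : ∃ p ∈ S, ∀ q ∈ S, ‖u - p‖ ≤ ‖u - q‖ then h.choose else u

/-- The set of Nash equilibria, in the joint space. -/
def nashSet {d1 d2 : ℕ} (A : Matrix (Fin d1) (Fin d2) ℝ) : Set (Joint d1 d2) :=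
  {z | IsNash A (xPart z) (yPart z)}

/-- SOL(Z_≥, F): solutions of the variational inequality. -/
def SolSet {d1 d2 : ℕ} (A : Matrix (Fin d1) (Fin d2) ℝ) : Set (Joint d1 d2) :=
  {z | z ∈ ZgeSet d1 d2 ∧ ∀ z' ∈ ZgeSet d1 d2, ⟪Fop A z, z - z'⟫ ≤ 0}

/-- p is a limit point of the sequence z: limit of a convergent subsequence. -/
def IsLimitPoint {E : Type*} [TopologicalSpace E] (z : ℕ → E) (p : E) : Prop :=
  ∃ φ : ℕ → ℕ, StrictMono φ ∧ Tendsto (z ∘ φ) atTop (𝓝 p)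

/-- The ExRM⁺ dynamics: z are the main iterates, zh the half-iterates. -/
def ExRM {d1 d2 : ℕ} (A : Matrix (Fin d1) (Fin d2) ℝ) (η : ℝ)
    (z zh : ℕ → Joint d1 d2) : Prop :=
  z 0 ∈ Zset d1 d2 ∧
  (∀ t, zh t = projOn (ZgeSet d1 d2) (z t - η • Fop A (z t))) ∧
  (∀ t, z (t + 1) = projOn (ZgeSet d1 d2) (z t - η • Fop A (zh t)))

/-- The SPRM⁺ dynamics (z^{-1} = w^0). -/
def SPRM {d1 d2 : ℕ} (A : Matrix (Fin d1) (Fin d2) ℝ) (η : ℝ)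
    (w z : ℕ → Joint d1 d2) : Prop :=
  w 0 ∈ Zset d1 d2 ∧
  z 0 = projOn (ZgeSet d1 d2) (w 0 - η • Fop A (w 0)) ∧
  (∀ t, z (t + 1) = projOn (ZgeSet d1 d2) (w (t + 1) - η • Fop A (z t))) ∧
  (∀ t, w (t + 1) = projOn (ZgeSet d1 d2) (w t - η • Fop A (z t)))

/-- z^{t-1} with the convention z^{-1} = w^0. -/
def zPrev {d1 d2 : ℕ} (w z : ℕ → Joint d1 d2) : ℕ → Joint d1 d2 :=
  fun t => if t = 0 then w 0 else z (t - 1)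


section Basics
variable {d d1 d2 : ℕ}

@[simp] lemma xPart_joinPt (x : Vec d1) (y : Vec d2) : xPart (joinPt x y) = x := rfl
@[simp] lemma yPart_joinPt (x : Vec d1) (y : Vec d2) : yPart (joinPt x y) = y := rfl

lemma joinPt_parts (z : Joint d1 d2) : joinPt (xPart z) (yPart z) = z := by
  ext s; cases s <;> rfl

lemma xPart_sub (a b : Joint d1 d2) : xPart (a - b) = xPart a - xPart b := rfl
lemma yPart_sub (a b : Joint d1 d2) : yPart (a - b) = yPart a - yPart b := rfl

lemma inner_split (a b : Joint d1 d2) :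
    ⟪a, b⟫ = ⟪xPart a, xPart b⟫ + ⟪yPart a, yPart b⟫ := by
  simp only [PiLp.inner_apply, RCLike.inner_apply, conj_trivial]
  rw [Fintype.sum_sum_type]; rfl

lemma norm_sq_split (a : Joint d1 d2) : ‖a‖ ^ 2 = ‖xPart a‖ ^ 2 + ‖yPart a‖ ^ 2 := by
  rw [← real_inner_self_eq_norm_sq, ← real_inner_self_eq_norm_sq, ← real_inner_self_eq_norm_sq]
  exact inner_split a a

lemma norm_xPart_le (a : Joint d1 d2) : ‖xPart a‖ ≤ ‖a‖ := by
  have h := norm_sq_split a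
  nlinarith [norm_nonneg (xPart a), norm_nonneg (yPart a), norm_nonneg a, sq_nonneg (‖yPart a‖)]

lemma norm_yPart_le (a : Joint d1 d2) : ‖yPart a‖ ≤ ‖a‖ := by
  have h := norm_sq_split a
  nlinarith [norm_nonneg (xPart a), norm_nonneg (yPart a), norm_nonneg a]

lemma norm_le_one_of_simplex {x : Vec d} (hx : x ∈ simplexSet d) : ‖x‖ ≤ 1 := by
  obtain ⟨h0, h1⟩ := hx
  have : ‖x‖ ^ 2 ≤ 1 := by
    rw [← real_inner_self_eq_norm_sq]
    simp only [PiLp.inner_apply, RCLike.inner_apply, conj_trivial]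
    calc ∑ i, x i * x i ≤ ∑ i, x i := by
          apply Finset.sum_le_sum
          intro i _
          have hle1 : x i ≤ 1 := by
            calc x i ≤ ∑ j, x j := Finset.single_le_sum (fun j _ => h0 j) (Finset.mem_univ i)
            _ = 1 := h1
          nlinarith [h0 i]
      _ = 1 := h1
  nlinarith [norm_nonneg x]

lemma simplex_subset_clipped : simplexSet d ⊆ clippedSet d :=
  fun x ⟨h0, h1⟩ => ⟨h0, h1.ge⟩

lemma Zset_subset_ZgeSet : Zset d1 d2 ⊆ ZgeSet d1 d2 :=
  fun z ⟨hx, hy⟩ => ⟨simplex_subset_clipped hx, simplex_subset_clipped hy⟩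

lemma isClosed_clippedSet : IsClosed (clippedSet d) := by
  have h1 : IsClosed {u : Vec d | ∀ i, 0 ≤ u i} := by
    have : {u : Vec d | ∀ i, 0 ≤ u i} = ⋂ i, {u : Vec d | 0 ≤ u i} := by
      ext u; simp
    rw [this]
    exact isClosed_iInter fun i => isClosed_le continuous_const
      ((continuous_apply i).comp (PiLp.continuous_ofLp 2 fun _ : Fin d => ℝ))
  have h2 : IsClosed {u : Vec d | 1 ≤ ∑ i, u i} := by
    apply isClosed_le continuous_const
    exact continuous_finset_sum _ fun i _ =>
      (continuous_apply i).comp (PiLp.continuous_ofLp 2 fun _ : Fin d => ℝ)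
  exact h1.inter h2

lemma convex_clippedSet : Convex ℝ (clippedSet d) := by
  intro u hu v hv a b ha hb hab
  constructor
  · intro i
    have : (a • u + b • v) i = a * u i + b * v i := rfl
    rw [this]
    exact add_nonneg (mul_nonneg ha (hu.1 i)) (mul_nonneg hb (hv.1 i))
  · have : ∑ i, (a • u + b • v) i = a * ∑ i, u i + b * ∑ i, v i := by
      rw [Finset.mul_sum, Finset.mul_sum, ← Finset.sum_add_distrib]; rfl
    rw [this]
    calc (1:ℝ) = a * 1 + b * 1 := by ring_nf; exact hab.symm
    _ ≤ a * ∑ i, u i + b * ∑ i, v i := by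
        apply add_le_add <;> [exact mul_le_mul_of_nonneg_left hu.2 ha;
          exact mul_le_mul_of_nonneg_left hv.2 hb]

lemma continuous_xPart : Continuous (fun z : Joint d1 d2 => xPart z) := by
  apply (PiLp.continuous_toLp 2 _).comp; apply continuous_pi; intro i
  exact (continuous_apply (Sum.inl i : Fin d1 ⊕ Fin d2)).comp
    (PiLp.continuous_ofLp 2 fun _ : Fin d1 ⊕ Fin d2 => ℝ)

lemma continuous_yPart : Continuous (fun z : Joint d1 d2 => yPart z) := by
  apply (PiLp.continuous_toLp 2 _).comp; apply continuous_pi; intro j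
  exact (continuous_apply (Sum.inr j : Fin d1 ⊕ Fin d2)).comp
    (PiLp.continuous_ofLp 2 fun _ : Fin d1 ⊕ Fin d2 => ℝ)

lemma isClosed_ZgeSet : IsClosed (ZgeSet d1 d2) :=
  (isClosed_clippedSet.preimage continuous_xPart).inter
    (isClosed_clippedSet.preimage continuous_yPart)

lemma convex_ZgeSet : Convex ℝ (ZgeSet d1 d2) := by
  intro u hu v hv a b ha hb hab
  have hX : xPart (a • u + b • v) = a • xPart u + b • xPart v := rfl
  have hY : yPart (a • u + b • v) = a • yPart u + b • yPart v := rfl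
  exact ⟨hX ▸ convex_clippedSet hu.1 hv.1 ha hb hab,
         hY ▸ convex_clippedSet hu.2 hv.2 ha hb hab⟩

lemma uniformPt_mem_simplex (hd : 1 ≤ d) : (WithLp.toLp 2 (fun _ => (d:ℝ)⁻¹) : Vec d) ∈ simplexSet d := by
  have hd0 : (0:ℝ) < d := by exact_mod_cast hd
  constructor
  · intro i; positivity
  · simp [Finset.sum_const, Finset.card_univ]
    field_simp

lemma nonempty_ZgeSet (hd1 : 1 ≤ d1) (hd2 : 1 ≤ d2) : (ZgeSet d1 d2).Nonempty := by
  refine ⟨joinPt (WithLp.toLp 2 (fun _ => (d1:ℝ)⁻¹)) (WithLp.toLp 2 (fun _ => (d2:ℝ)⁻¹)), ?_, ?_⟩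
  · exact simplex_subset_clipped (uniformPt_mem_simplex hd1)
  · exact simplex_subset_clipped (uniformPt_mem_simplex hd2)

end Basics

section Proj
variable {E : Type*} [NormedAddCommGroup E] [InnerProductSpace ℝ E] [CompleteSpace E]
variable {S : Set E}

lemma projOn_exists (hS : Convex ℝ S) (hcl : IsClosed S) (hne : S.Nonempty) (u : E) :
    ∃ p ∈ S, ∀ q ∈ S, ‖u - p‖ ≤ ‖u - q‖ := by
  obtain ⟨v, hv, hmin⟩ := exists_norm_eq_iInf_of_complete_convex hne
    (hcl.isComplete) hS u
  haveI : Nonempty S := hne.to_subtype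
  refine ⟨v, hv, fun q hq => ?_⟩
  rw [hmin]
  exact ciInf_le ⟨0, fun x ⟨w, hw⟩ => hw ▸ norm_nonneg _⟩ (⟨q, hq⟩ : S)

lemma projOn_mem (hS : Convex ℝ S) (hcl : IsClosed S) (hne : S.Nonempty) (u : E) :
    projOn S u ∈ S := by
  have h := projOn_exists hS hcl hne u
  rw [projOn, dif_pos h]
  exact h.choose_spec.1

lemma projOn_min (hS : Convex ℝ S) (hcl : IsClosed S) (hne : S.Nonempty) (u : E) :
    ∀ q ∈ S, ‖u - projOn S u‖ ≤ ‖u - q‖ := by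
  have h := projOn_exists hS hcl hne u
  rw [projOn, dif_pos h]
  exact h.choose_spec.2

lemma projOn_inner_le (hS : Convex ℝ S) (hcl : IsClosed S) (hne : S.Nonempty) (u : E) :
    ∀ w ∈ S, ⟪u - projOn S u, w - projOn S u⟫ ≤ 0 := by
  have hmem := projOn_mem hS hcl hne u
  have hmin := projOn_min hS hcl hne u
  haveI : Nonempty S := hne.to_subtype
  have heq : ‖u - projOn S u‖ = ⨅ w : S, ‖u - w‖ := by
    apply le_antisymm
    · exact le_ciInf fun w => hmin w w.2
    · exact ciInf_le ⟨0, fun x ⟨w, hw⟩ => hw ▸ norm_nonneg _⟩ (⟨_, hmem⟩ : S)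
  exact (norm_eq_iInf_iff_real_inner_le_zero hS hmem).mp heq

lemma projOn_dist_sq (hS : Convex ℝ S) (hcl : IsClosed S) (hne : S.Nonempty) (u : E)
    {w : E} (hw : w ∈ S) :
    ‖projOn S u - w‖ ^ 2 ≤ ‖u - w‖ ^ 2 - ‖u - projOn S u‖ ^ 2 := by
  set p := projOn S u
  have hip : ⟪u - p, w - p⟫ ≤ 0 := projOn_inner_le hS hcl hne u w hw
  have hexp : ‖u - w‖ ^ 2 = ‖u - p‖ ^ 2 - 2 * ⟪u - p, w - p⟫ + ‖p - w‖ ^ 2 := by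
    have : u - w = (u - p) - (w - p) := by abel
    rw [this, norm_sub_sq_real]
    have : ‖w - p‖ = ‖p - w‖ := norm_sub_rev _ _
    rw [this]
  nlinarith [hip]

lemma projOn_nonexpansive (hS : Convex ℝ S) (hcl : IsClosed S) (hne : S.Nonempty) (u v : E) :
    ‖projOn S u - projOn S v‖ ≤ ‖u - v‖ := by
  set p := projOn S u
  set q := projOn S v
  have h1 : ⟪u - p, q - p⟫ ≤ 0 := projOn_inner_le hS hcl hne u q (projOn_mem hS hcl hne v)
  have h2 : ⟪v - q, p - q⟫ ≤ 0 := projOn_inner_le hS hcl hne v p (projOn_mem hS hcl hne u)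
  have key : ‖p - q‖ ^ 2 ≤ ⟪u - v, p - q⟫ := by
    have e1 : ⟪u - v, p - q⟫ = ⟪u - p, p - q⟫ + ⟪p - q, p - q⟫ + ⟪q - v, p - q⟫ := by
      rw [← inner_add_left, ← inner_add_left]
      congr 1
      abel
    have e2 : ⟪u - p, p - q⟫ = -⟪u - p, q - p⟫ := by
      rw [← inner_neg_right]; congr 1; abel
    have e3 : ⟪q - v, p - q⟫ = -⟪v - q, p - q⟫ := by
      rw [← inner_neg_left]; congr 1; abel
    rw [e1, e2, e3, real_inner_self_eq_norm_sq]
    linarith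
  by_cases hpq : p - q = 0
  · rw [show p - q = 0 from hpq]
    simp
  · have hn : 0 < ‖p - q‖ := norm_pos_iff.mpr hpq
    have := real_inner_le_norm (u - v) (p - q)
    nlinarith
end Proj
section NormPart
variable {d : ℕ}

lemma norm_sq_eq_sum (q : Vec d) : ‖q‖ ^ 2 = ∑ i, q i ^ 2 := by
  rw [← real_inner_self_eq_norm_sq]
  simp only [PiLp.inner_apply, RCLike.inner_apply, conj_trivial]
  exact Finset.sum_congr rfl fun i _ => (sq (q i)).symm

lemma sum_abs_eq_sum {u : Vec d} (hu : u ∈ clippedSet d) : ∑ i, |u i| = ∑ i, u i :=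
  Finset.sum_congr rfl fun i _ => abs_of_nonneg (hu.1 i)

lemma sum_pos_of_clipped {u : Vec d} (hu : u ∈ clippedSet d) : 0 < ∑ i, u i :=
  lt_of_lt_of_le one_pos hu.2

lemma normPart_eq {u : Vec d} (hu : u ∈ clippedSet d) :
    normPart u = (∑ i, u i)⁻¹ • u := by
  rw [normPart, sum_abs_eq_sum hu]

lemma normPart_mem_simplex {u : Vec d} (hu : u ∈ clippedSet d) :
    normPart u ∈ simplexSet d := by
  rw [normPart_eq hu]
  have ha : 0 < ∑ i, u i := sum_pos_of_clipped hu
  constructor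
  · intro i
    have : ((∑ j, u j)⁻¹ • u) i = (∑ j, u j)⁻¹ * u i := rfl
    rw [this]
    exact mul_nonneg (inv_nonneg.mpr ha.le) (hu.1 i)
  · have : ∑ i, ((∑ j, u j)⁻¹ • u) i = (∑ j, u j)⁻¹ * ∑ i, u i := by
      rw [Finset.mul_sum]; rfl
    rw [this, inv_mul_cancel₀ ha.ne']

lemma sum_sq_sub (f g : Fin d → ℝ) (c : ℝ) :
    ∑ i, (f i - c * g i) ^ 2
      = ∑ i, f i ^ 2 - 2 * c * (∑ i, f i * g i) + c ^ 2 * ∑ i, g i ^ 2 := by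
  have h : ∀ i : Fin d, (f i - c * g i) ^ 2
      = f i ^ 2 - 2 * c * (f i * g i) + c ^ 2 * g i ^ 2 := fun i => by ring
  rw [Finset.sum_congr rfl (fun i _ => h i), Finset.sum_add_distrib, Finset.sum_sub_distrib,
    ← Finset.mul_sum, ← Finset.mul_sum]

/-- Key algebraic inequality: if `x'` sums to 1 then
`∑ (w i - (∑ w) x' i)^2 ≤ d (∑ x'^2) (∑ w^2)`. -/
lemma sum_sq_center_le (hd : 0 < d) {x' : Vec d} (hx : ∑ i, x' i = 1) (w : Vec d) :
    ∑ i, (w i - (∑ k, w k) * x' i) ^ 2 ≤ d * (∑ i, x' i ^ 2) * ∑ i, w i ^ 2 := by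
  have hdR : (0:ℝ) < d := by exact_mod_cast hd
  set t := ∑ k, w k with ht
  set Q := ∑ i, w i ^ 2 with hQ
  set s := ∑ i, x' i ^ 2 with hs
  set wp : Fin d → ℝ := fun i => w i - (t/d) * 1 with hwp
  set xp : Fin d → ℝ := fun i => x' i - (1/d) * 1 with hxp
  set P := ∑ i, wp i ^ 2 with hP
  set Ee := ∑ i, xp i ^ 2 with hE
  set Ip := ∑ i, wp i * xp i with hI
  have hones : ∑ _i : Fin d, (1:ℝ) ^ 2 = d := by simp
  have hw1 : ∑ i, w i * 1 = t := by simp [ht]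
  have hx1 : ∑ i, x' i * 1 = 1 := by simpa using hx
  have hPeq : P = Q - t ^ 2 / d := by
    rw [hP, hwp]
    rw [sum_sq_sub w (fun _ => 1) (t/d)]
    rw [hones, hw1, ← hQ]
    field_simp
    ring
  have hEeq : Ee = s - 1 / d := by
    rw [hE, hxp, sum_sq_sub x' (fun _ => 1) (1/d), hones, hx1, ← hs]
    field_simp
    ring
  have hLHS : ∑ i, (w i - t * x' i) ^ 2 = P - 2 * t * Ip + t ^ 2 * Ee := by
    have hpt : ∀ i, w i - t * x' i = wp i - t * xp i := by
      intro i; rw [hwp, hxp]; field_simp; ring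
    calc ∑ i, (w i - t * x' i) ^ 2 = ∑ i, (wp i - t * xp i) ^ 2 :=
          Finset.sum_congr rfl fun i _ => by rw [hpt i]
      _ = P - 2 * t * Ip + t ^ 2 * Ee := by rw [sum_sq_sub wp xp t, ← hP, ← hI, ← hE]
  have hCS : Ip ^ 2 ≤ P * Ee := by
    rw [hI, hP, hE]
    exact Finset.sum_mul_sq_le_sq_mul_sq _ _ _
  have hPn : 0 ≤ P := Finset.sum_nonneg fun i _ => sq_nonneg _
  have hEn : 0 ≤ Ee := Finset.sum_nonneg fun i _ => sq_nonneg _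
  rw [hLHS]
  have hd2CS : (d:ℝ)^2 * Ip^2 ≤ (d:ℝ)^2 * (P * Ee) :=
    mul_le_mul_of_nonneg_left hCS (by positivity)
  have h1 : (d:ℝ) * P = d * Q - t ^ 2 := by rw [hPeq]; field_simp
  have h2 : (d:ℝ) * Ee = d * s - 1 := by rw [hEeq]; field_simp
  have key : (d:ℝ) * ((d:ℝ) * s * Q - (P - 2*t*Ip + t^2*Ee))
      = (d:ℝ)^2 * (P * Ee) + t^2 + 2*(d:ℝ)*t*Ip := by
    linear_combination (-(1 + (d:ℝ)*Ee)) * h1 + (-(d:ℝ)*Q) * h2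
  nlinarith [sq_nonneg ((d:ℝ) * Ip + t), hd2CS, hdR, key]

/-- Norm form: for `x'` in the simplex, `‖w - (∑ w) • x'‖ ≤ √d ‖w‖`. -/
lemma norm_center_le (hd : 0 < d) {x' : Vec d} (hx : x' ∈ simplexSet d) (w : Vec d) :
    ‖w - (∑ k, w k) • x'‖ ≤ Real.sqrt d * ‖w‖ := by
  have hdR : (0:ℝ) < d := by exact_mod_cast hd
  have hsq : ‖w - (∑ k, w k) • x'‖ ^ 2 ≤ d * ‖w‖ ^ 2 := by
    rw [norm_sq_eq_sum]
    have hcoord : ∀ i, (w - (∑ k, w k) • x') i = w i - (∑ k, w k) * x' i := fun i => rfl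
    calc ∑ i, ((w - (∑ k, w k) • x') i) ^ 2
        = ∑ i, (w i - (∑ k, w k) * x' i) ^ 2 :=
          Finset.sum_congr rfl fun i _ => by rw [hcoord i]
      _ ≤ d * (∑ i, x' i ^ 2) * ∑ i, w i ^ 2 := sum_sq_center_le hd hx.2 w
      _ ≤ d * 1 * ∑ i, w i ^ 2 := by
          apply mul_le_mul_of_nonneg_right _ (Finset.sum_nonneg fun i _ => sq_nonneg _)
          apply mul_le_mul_of_nonneg_left _ hdR.le
          have := norm_le_one_of_simplex hx
          have h2 := norm_sq_eq_sum x'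
          nlinarith [norm_nonneg x']
      _ = d * ‖w‖ ^ 2 := by rw [norm_sq_eq_sum]; ring
  have h1 : 0 ≤ Real.sqrt d * ‖w‖ := by positivity
  nlinarith [Real.sq_sqrt hdR.le, Real.sqrt_nonneg (d:ℝ), norm_nonneg (w - (∑ k, w k) • x'),
    norm_nonneg w]

/-- The normalization map is √d-Lipschitz on the clipped orthant. -/
lemma normPart_lipschitz (hd : 0 < d) {u v : Vec d}
    (hu : u ∈ clippedSet d) (hv : v ∈ clippedSet d) :
    ‖normPart u - normPart v‖ ≤ Real.sqrt d * ‖u - v‖ := by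
  have ha : 0 < ∑ i, u i := sum_pos_of_clipped hu
  have hb : 0 < ∑ i, v i := sum_pos_of_clipped hv
  have hsumw : ∑ k, (u - v) k = (∑ i, u i) - ∑ i, v i := by
    simp only [PiLp.sub_apply]
    rw [Finset.sum_sub_distrib]
  have hid : normPart u - normPart v
      = (∑ i, u i)⁻¹ • ((u - v) - (∑ k, (u - v) k) • normPart v) := by
    rw [normPart_eq hu, normPart_eq hv, hsumw]
    ext i
    simp only [PiLp.smul_apply, PiLp.sub_apply, smul_eq_mul]
    field_simp
    ring
  rw [hid]
  have hnv : normPart v ∈ simplexSet d := normPart_mem_simplex hv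
  calc ‖(∑ i, u i)⁻¹ • ((u - v) - (∑ k, (u - v) k) • normPart v)‖
      = |(∑ i, u i)⁻¹| * ‖(u - v) - (∑ k, (u - v) k) • normPart v‖ := by rw [norm_smul]; rfl
    _ ≤ 1 * ‖(u - v) - (∑ k, (u - v) k) • normPart v‖ := by
        apply mul_le_mul_of_nonneg_right _ (norm_nonneg _)
        rw [abs_of_nonneg (inv_nonneg.mpr ha.le)]
        rw [inv_le_one_iff₀]
        right; exact hu.2
    _ = ‖(u - v) - (∑ k, (u - v) k) • normPart v‖ := one_mul _
    _ ≤ Real.sqrt d * ‖u - v‖ := norm_center_le hd hnv (u - v)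

lemma norm_normPart_le {u : Vec d} (hu : u ∈ clippedSet d) : ‖normPart u‖ ≤ 1 :=
  norm_le_one_of_simplex (normPart_mem_simplex hu)

end NormPart
section FopBounds
variable {d1 d2 : ℕ}

/-- Matrix–vector product landing in `Vec`. -/
def mv (A : Matrix (Fin d1) (Fin d2) ℝ) (y : Vec d2) : Vec d1 := WithLp.toLp 2 (fun i => ∑ j, A i j * y j)

/-- Transposed matrix–vector product. -/
def mvT (A : Matrix (Fin d1) (Fin d2) ℝ) (x : Vec d1) : Vec d2 := WithLp.toLp 2 (fun j => ∑ i, A i j * x i)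

lemma opNorm_nonneg (A : Matrix (Fin d1) (Fin d2) ℝ) : 0 ≤ opNorm A := norm_nonneg _

lemma norm_mv_le (A : Matrix (Fin d1) (Fin d2) ℝ) (y : Vec d2) :
    ‖mv A y‖ ≤ opNorm A * ‖y‖ := by
  have h : mv A y = Matrix.toEuclideanLin A y := by
    ext i
    rw [Matrix.toEuclideanLin_apply]
    rfl
  rw [h]
  exact (LinearMap.toContinuousLinearMap (Matrix.toEuclideanLin A)).le_opNorm y

lemma inner_mv (A : Matrix (Fin d1) (Fin d2) ℝ) (x : Vec d1) (y : Vec d2) :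
    ⟪x, mv A y⟫ = payoff A x y := by
  rw [real_inner_comm]
  simp only [PiLp.inner_apply, RCLike.inner_apply, conj_trivial, mv, payoff]
  rw [Finset.sum_congr rfl (fun i _ => by rw [Finset.mul_sum] : ∀ i ∈ Finset.univ,
    x i * (∑ j, A i j * y j) = ∑ j, x i * (A i j * y j))]
  exact Finset.sum_congr rfl fun i _ => Finset.sum_congr rfl fun j _ => by ring

lemma inner_mvT (A : Matrix (Fin d1) (Fin d2) ℝ) (x : Vec d1) (y : Vec d2) :
    ⟪mvT A x, y⟫ = payoff A x y := by
  rw [real_inner_comm]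
  simp only [PiLp.inner_apply, RCLike.inner_apply, conj_trivial, mvT, payoff]
  rw [Finset.sum_comm]
  refine Finset.sum_congr rfl fun i _ => ?_
  rw [Finset.sum_mul]
  exact Finset.sum_congr rfl fun j _ => by ring

lemma norm_mvT_le (A : Matrix (Fin d1) (Fin d2) ℝ) (x : Vec d1) :
    ‖mvT A x‖ ≤ opNorm A * ‖x‖ := by
  by_cases h0 : mvT A x = 0
  · rw [h0, norm_zero]
    exact mul_nonneg (opNorm_nonneg A) (norm_nonneg x)
  · have key : ‖mvT A x‖ ^ 2 ≤ (opNorm A * ‖x‖) * ‖mvT A x‖ := by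
      rw [← real_inner_self_eq_norm_sq, inner_mvT, ← inner_mv]
      calc ⟪x, mv A (mvT A x)⟫ ≤ ‖x‖ * ‖mv A (mvT A x)‖ := real_inner_le_norm _ _
        _ ≤ ‖x‖ * (opNorm A * ‖mvT A x‖) := by
            exact mul_le_mul_of_nonneg_left (norm_mv_le A _) (norm_nonneg x)
        _ = (opNorm A * ‖x‖) * ‖mvT A x‖ := by ring
    have hpos : 0 < ‖mvT A x‖ := norm_pos_iff.mpr h0
    nlinarith
lemma payoff_abs_le (A : Matrix (Fin d1) (Fin d2) ℝ) (x : Vec d1) (y : Vec d2) :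
    |payoff A x y| ≤ opNorm A * ‖x‖ * ‖y‖ := by
  rw [← inner_mv]
  calc |⟪x, mv A y⟫| ≤ ‖x‖ * ‖mv A y‖ := abs_real_inner_le_norm _ _
    _ ≤ ‖x‖ * (opNorm A * ‖y‖) := mul_le_mul_of_nonneg_left (norm_mv_le A y) (norm_nonneg x)
    _ = opNorm A * ‖x‖ * ‖y‖ := by ring

lemma payoff_sub_left (A : Matrix (Fin d1) (Fin d2) ℝ) (x x' : Vec d1) (y : Vec d2) :
    payoff A x y - payoff A x' y = payoff A (x - x') y := by
  simp only [payoff, PiLp.sub_apply]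
  rw [← Finset.sum_sub_distrib]
  refine Finset.sum_congr rfl fun i _ => ?_
  rw [← Finset.sum_sub_distrib]
  exact Finset.sum_congr rfl fun j _ => by ring

lemma payoff_sub_right (A : Matrix (Fin d1) (Fin d2) ℝ) (x : Vec d1) (y y' : Vec d2) :
    payoff A x y - payoff A x y' = payoff A x (y - y') := by
  simp only [payoff, PiLp.sub_apply]
  rw [← Finset.sum_sub_distrib]
  refine Finset.sum_congr rfl fun i _ => ?_
  rw [← Finset.sum_sub_distrib]
  exact Finset.sum_congr rfl fun j _ => by ring

end FopBounds
section Simplex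
variable {d d1 d2 : ℕ}

lemma isClosed_simplexSet : IsClosed (simplexSet d) := by
  have h1 : IsClosed {u : Vec d | ∀ i, 0 ≤ u i} := by
    have : {u : Vec d | ∀ i, 0 ≤ u i} = ⋂ i, {u : Vec d | 0 ≤ u i} := by ext u; simp
    rw [this]
    exact isClosed_iInter fun i => isClosed_le continuous_const
      ((continuous_apply i).comp (PiLp.continuous_ofLp 2 fun _ : Fin d => ℝ))
  have h2 : IsClosed {u : Vec d | ∑ i, u i = 1} := by
    apply isClosed_eq _ continuous_const
    exact continuous_finset_sum _ fun i _ =>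
      (continuous_apply i).comp (PiLp.continuous_ofLp 2 fun _ : Fin d => ℝ)
  exact h1.inter h2

lemma isCompact_simplexSet : IsCompact (simplexSet d) := by
  refine IsCompact.of_isClosed_subset (isCompact_closedBall (0 : Vec d) 1)
    isClosed_simplexSet ?_
  intro x hx
  simpa [Metric.mem_closedBall, dist_eq_norm] using norm_le_one_of_simplex hx

lemma convex_simplexSet : Convex ℝ (simplexSet d) := by
  intro u hu v hv a b ha hb hab
  constructor
  · intro i
    have : (a • u + b • v) i = a * u i + b * v i := rfl
    rw [this]
    exact add_nonneg (mul_nonneg ha (hu.1 i)) (mul_nonneg hb (hv.1 i))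
  · have : ∑ i, (a • u + b • v) i = a * ∑ i, u i + b * ∑ i, v i := by
      rw [Finset.mul_sum, Finset.mul_sum, ← Finset.sum_add_distrib]; rfl
    rw [this, hu.2, hv.2]; linarith

lemma single_mem_simplex (j : Fin d) : (EuclideanSpace.single j (1:ℝ)) ∈ simplexSet d := by
  constructor
  · intro i
    rw [EuclideanSpace.single_apply]
    split <;> norm_num
  · rw [Finset.sum_congr rfl fun i _ => EuclideanSpace.single_apply j 1 i]
    simp

lemma abs_coord_le (q : Vec d) (j : Fin d) : |q j| ≤ ‖q‖ := by
  have h1 : q j ^ 2 ≤ ‖q‖ ^ 2 := by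
    rw [norm_sq_eq_sum]
    exact Finset.single_le_sum (fun i _ => sq_nonneg (q i)) (Finset.mem_univ j)
  have := abs_nonneg (q j)
  nlinarith [norm_nonneg q, abs_nonneg (q j), sq_abs (q j)]

lemma payoff_eq_sum_right (A : Matrix (Fin d1) (Fin d2) ℝ) (x : Vec d1) (y : Vec d2) :
    payoff A x y = ∑ j, y j * mvT A x j := by
  rw [← inner_mvT]
  simp only [PiLp.inner_apply, RCLike.inner_apply, conj_trivial]

lemma payoff_eq_sum_left (A : Matrix (Fin d1) (Fin d2) ℝ) (x : Vec d1) (y : Vec d2) :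
    payoff A x y = ∑ i, x i * mv A y i := by
  rw [← inner_mv]
  simp only [PiLp.inner_apply, RCLike.inner_apply, conj_trivial]
  exact Finset.sum_congr rfl fun j _ => by ring

lemma payoff_single_right (A : Matrix (Fin d1) (Fin d2) ℝ) (x : Vec d1) (j : Fin d2) :
    payoff A x (EuclideanSpace.single j (1:ℝ)) = mvT A x j := by
  rw [payoff_eq_sum_right]
  rw [Finset.sum_eq_single j]
  · rw [EuclideanSpace.single_apply]; simp
  · intro k _ hk
    rw [EuclideanSpace.single_apply]
    simp [hk]
  · simp

lemma payoff_single_left (A : Matrix (Fin d1) (Fin d2) ℝ) (y : Vec d2) (i : Fin d1) :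
    payoff A (EuclideanSpace.single i (1:ℝ)) y = mv A y i := by
  rw [payoff_eq_sum_left]
  rw [Finset.sum_eq_single i]
  · rw [EuclideanSpace.single_apply]; simp
  · intro k _ hk
    rw [EuclideanSpace.single_apply]
    simp [hk]
  · simp

variable (hd2 : 0 < d2) (hd1 : 0 < d1)

lemma maxPay_eq_sup' (hd2 : 0 < d2) (A : Matrix (Fin d1) (Fin d2) ℝ) (x : Vec d1) :
    sSup ((fun y' => payoff A x y') '' simplexSet d2)
      = Finset.univ.sup' (by simpa [Finset.univ_nonempty_iff, Fin.pos_iff_nonempty] using hd2)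
          (fun j => mvT A x j) := by
  haveI : Nonempty (Fin d2) := Fin.pos_iff_nonempty.mp hd2
  set M := Finset.univ.sup' ⟨Classical.arbitrary (Fin d2), Finset.mem_univ _⟩
    (fun j => mvT A x j) with hM
  have hne : Finset.univ.Nonempty (α := Fin d2) := ⟨Classical.arbitrary _, Finset.mem_univ _⟩
  apply IsGreatest.csSup_eq
  constructor
  · obtain ⟨j, _, hj⟩ := Finset.exists_mem_eq_sup' hne (fun j => mvT A x j)
    exact ⟨EuclideanSpace.single j 1, single_mem_simplex j, by
      show payoff A x (EuclideanSpace.single j 1) = M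
      rw [payoff_single_right, ← hj]⟩
  · rintro _ ⟨y', hy', rfl⟩
    show payoff A x y' ≤ M
    rw [payoff_eq_sum_right]
    calc ∑ j, y' j * mvT A x j
        ≤ ∑ j, y' j * (Finset.univ.sup' hne fun j => mvT A x j) := by
          apply Finset.sum_le_sum
          intro j _
          exact mul_le_mul_of_nonneg_left (Finset.le_sup' _ (Finset.mem_univ j)) (hy'.1 j)
      _ = Finset.univ.sup' hne fun j => mvT A x j := by
          rw [← Finset.sum_mul, hy'.2, one_mul]

lemma minPay_eq_inf' (hd1 : 0 < d1) (A : Matrix (Fin d1) (Fin d2) ℝ) (y : Vec d2) :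
    sInf ((fun x' => payoff A x' y) '' simplexSet d1)
      = Finset.univ.inf' (by simpa [Finset.univ_nonempty_iff, Fin.pos_iff_nonempty] using hd1)
          (fun i => mv A y i) := by
  haveI : Nonempty (Fin d1) := Fin.pos_iff_nonempty.mp hd1
  have hne : Finset.univ.Nonempty (α := Fin d1) := ⟨Classical.arbitrary _, Finset.mem_univ _⟩
  apply IsLeast.csInf_eq
  constructor
  · obtain ⟨i, _, hi⟩ := Finset.exists_mem_eq_inf' hne (fun i => mv A y i)
    exact ⟨EuclideanSpace.single i 1, single_mem_simplex i, by
      show payoff A (EuclideanSpace.single i 1) y = _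
      rw [payoff_single_left, ← hi]⟩
  · rintro _ ⟨x', hx', rfl⟩
    show _ ≤ payoff A x' y
    rw [payoff_eq_sum_left]
    calc Finset.univ.inf' hne (fun i => mv A y i)
        = ∑ i, x' i * Finset.univ.inf' hne (fun i => mv A y i) := by
          rw [← Finset.sum_mul, hx'.2, one_mul]
      _ ≤ ∑ i, x' i * mv A y i := by
          apply Finset.sum_le_sum
          intro i _
          exact mul_le_mul_of_nonneg_left (Finset.inf'_le _ (Finset.mem_univ i)) (hx'.1 i)

lemma dualGap_eq (hd1 : 0 < d1) (hd2 : 0 < d2) (A : Matrix (Fin d1) (Fin d2) ℝ)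
    (x : Vec d1) (y : Vec d2) :
    dualGap A x y
      = Finset.univ.sup' (by simpa [Finset.univ_nonempty_iff, Fin.pos_iff_nonempty] using hd2)
          (fun j => mvT A x j)
        - Finset.univ.inf' (by simpa [Finset.univ_nonempty_iff, Fin.pos_iff_nonempty] using hd1)
          (fun i => mv A y i) := by
  rw [dualGap, maxPay_eq_sup' hd2, minPay_eq_inf' hd1]

end Simplex
section Minimax
variable {d d1 d2 : ℕ}

lemma vec_eq_sum_single (u : Vec d) :
    u = ∑ i, u i • EuclideanSpace.single i (1:ℝ) := by
  ext k
  have h : (∑ i, u i • EuclideanSpace.single i (1:ℝ)) k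
      = ∑ i, u i * (EuclideanSpace.single i (1:ℝ)) k := by
    rw [WithLp.ofLp_sum, Finset.sum_apply]
    rfl
  rw [h]
  rw [Finset.sum_congr rfl fun i _ => by rw [EuclideanSpace.single_apply]]
  simp [Finset.sum_ite_eq]

lemma mv_eq_toEuclideanLin (A : Matrix (Fin d1) (Fin d2) ℝ) (y : Vec d2) :
    mv A y = Matrix.toEuclideanLin A y := by
  ext i
  rw [Matrix.toEuclideanLin_apply]
  rfl

lemma continuous_mv (A : Matrix (Fin d1) (Fin d2) ℝ) : Continuous (fun y => mv A y) := by
  have : (fun y => mv A y) = fun y => Matrix.toEuclideanLin A y := by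
    funext y; exact mv_eq_toEuclideanLin A y
  rw [this]
  exact (LinearMap.toContinuousLinearMap (Matrix.toEuclideanLin A)).continuous

lemma continuous_mvT_coord (A : Matrix (Fin d1) (Fin d2) ℝ) (j : Fin d2) :
    Continuous (fun x : Vec d1 => mvT A x j) := by
  show Continuous fun x : Vec d1 => ∑ i, A i j * x i
  apply continuous_finset_sum
  intro i _
  exact (continuous_const.mul
    ((continuous_apply i).comp (PiLp.continuous_ofLp 2 fun _ : Fin d1 => ℝ)))

/-- Existence of a saddle point (von Neumann minimax, via separation). -/
lemma exists_saddle (hd1 : 0 < d1) (hd2 : 0 < d2) (A : Matrix (Fin d1) (Fin d2) ℝ) :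
    ∃ xs ∈ simplexSet d1, ∃ ys ∈ simplexSet d2,
      (∀ y' ∈ simplexSet d2, payoff A xs y' ≤ payoff A xs ys) ∧
      (∀ x' ∈ simplexSet d1, payoff A xs ys ≤ payoff A x' ys) := by
  haveI i1 : Nonempty (Fin d1) := Fin.pos_iff_nonempty.mp hd1
  haveI i2 : Nonempty (Fin d2) := Fin.pos_iff_nonempty.mp hd2
  have hne1 : (Finset.univ : Finset (Fin d1)).Nonempty := Finset.univ_nonempty
  have hne2 : (Finset.univ : Finset (Fin d2)).Nonempty := Finset.univ_nonempty
  set φ : Vec d1 → ℝ := fun x => Finset.univ.sup' hne2 (fun j => mvT A x j) with hφ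
  set ψ : Vec d2 → ℝ := fun y => Finset.univ.inf' hne1 (fun i => mv A y i) with hψ
  have hφc : Continuous φ :=
    Continuous.finset_sup'_apply hne2 (fun j _ => continuous_mvT_coord A j)
  have hψc : Continuous ψ := by
    apply Continuous.finset_inf'_apply hne1
    intro i _
    have hcoord : Continuous fun u : Vec d1 => u i :=
      (continuous_apply i).comp (PiLp.continuous_ofLp 2 fun _ : Fin d1 => ℝ)
    exact hcoord.comp (continuous_mv A)
  obtain ⟨xs, hxs, hxsmin⟩ := isCompact_simplexSet.exists_isMinOn
    ⟨_, uniformPt_mem_simplex hd1⟩ hφc.continuousOn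
  obtain ⟨ys, hys, hysmax⟩ := isCompact_simplexSet.exists_isMaxOn
    ⟨_, uniformPt_mem_simplex hd2⟩ hψc.continuousOn
  set v2 := φ xs
  set v1 := ψ ys
  -- payoff bounds against sup'/inf'
  have hpay_le : ∀ x, ∀ y' ∈ simplexSet d2, payoff A x y' ≤ φ x := by
    intro x y' hy'
    rw [payoff_eq_sum_right]
    calc ∑ j, y' j * mvT A x j ≤ ∑ j, y' j * φ x := by
          apply Finset.sum_le_sum
          intro j _
          exact mul_le_mul_of_nonneg_left (Finset.le_sup' _ (Finset.mem_univ j)) (hy'.1 j)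
      _ = φ x := by rw [← Finset.sum_mul, hy'.2, one_mul]
  have hpay_ge : ∀ y, ∀ x' ∈ simplexSet d1, ψ y ≤ payoff A x' y := by
    intro y x' hx'
    rw [payoff_eq_sum_left]
    calc ψ y = ∑ i, x' i * ψ y := by rw [← Finset.sum_mul, hx'.2, one_mul]
      _ ≤ ∑ i, x' i * mv A y i := by
          apply Finset.sum_le_sum
          intro i _
          exact mul_le_mul_of_nonneg_left (Finset.inf'_le _ (Finset.mem_univ i)) (hx'.1 i)
  -- hard direction : v2 ≤ v1
  have hkey : v2 ≤ v1 := by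
    by_contra hcon
    push_neg at hcon
    set c := (v1 + v2) / 2 with hc
    have hc1 : v1 < c := by simp only [hc]; linarith
    have hc2 : c < v2 := by simp only [hc]; linarith
    by_cases hex : ∃ y ∈ simplexSet d2, ∀ i, c ≤ mv A y i
    · obtain ⟨y, hy, hyc⟩ := hex
      have : c ≤ ψ y := Finset.le_inf' hne1 _ fun i _ => hyc i
      have : ψ y ≤ v1 := hysmax hy
      linarith
    · -- separation
      push_neg at hex
      set K := (fun y => Matrix.toEuclideanLin A y) '' simplexSet d2 with hK
      set N := {u : Vec d1 | ∀ i, c ≤ u i} with hN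
      have hKconv : Convex ℝ K := convex_simplexSet.linear_image _
      have hKcomp : IsCompact K := isCompact_simplexSet.image
        (LinearMap.toContinuousLinearMap (Matrix.toEuclideanLin A)).continuous
      have hNconv : Convex ℝ N := by
        intro u hu v hv a b ha hb hab
        intro i
        have : (a • u + b • v) i = a * u i + b * v i := rfl
        rw [this]
        calc c = a * c + b * c := by rw [← add_mul, hab, one_mul]
          _ ≤ a * u i + b * v i := add_le_add
            (mul_le_mul_of_nonneg_left (hu i) ha) (mul_le_mul_of_nonneg_left (hv i) hb)
      have hNcl : IsClosed N := by
        have : N = ⋂ i, {u : Vec d1 | c ≤ u i} := by ext u; simp [hN]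
        rw [this]
        exact isClosed_iInter fun i => isClosed_le continuous_const
          ((continuous_apply i).comp (PiLp.continuous_ofLp 2 fun _ : Fin d1 => ℝ))
      have hdisj : Disjoint K N := by
        rw [Set.disjoint_left]
        rintro _ ⟨y, hy, rfl⟩ hmem
        obtain ⟨i, hi⟩ := hex y hy
        have h2 : c ≤ mv A y i := by rw [mv_eq_toEuclideanLin]; exact hmem i
        linarith
      obtain ⟨f, u0, v0, hfK, huv, hfN⟩ :=
        geometric_hahn_banach_compact_closed hKconv hKcomp hNconv hNcl hdisj
      set w : Vec d1 := WithLp.toLp 2 (fun i => f (EuclideanSpace.single i (1:ℝ))) with hw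
      have hfdecomp : ∀ u : Vec d1, f u = ∑ i, u i * w i := by
        intro u
        conv_lhs => rw [vec_eq_sum_single u]
        rw [map_sum]
        exact Finset.sum_congr rfl fun i _ => by rw [map_smul]; rfl
      have honesN : ∀ t : ℝ, 0 ≤ t → ∀ i0 : Fin d1,
          (WithLp.toLp 2 (fun i => c + t * (if i = i0 then (1:ℝ) else 0)) : Vec d1) ∈ N := by
        intro t ht i0 i
        dsimp only [hN, Set.mem_setOf_eq]
        split <;> nlinarith
      set cvec : Vec d1 := WithLp.toLp 2 (fun _ => c) with hcvec
      have hcN : cvec ∈ N := fun i => le_refl c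
      have hw_nonneg : ∀ i, 0 ≤ w i := by
        intro i
        by_contra hneg
        push_neg at hneg
        set t := (f cvec - v0 + 1) / (-(w i)) with htdef
        have hfc : v0 < f cvec := hfN _ hcN
        have ht : 0 ≤ t := by
          apply div_nonneg <;> nlinarith
        have hmem := hfN _ (honesN t ht i)
        have hlin : f (WithLp.toLp 2 (fun k => c + t * (if k = i then (1:ℝ) else 0)) : Vec d1)
            = f cvec + t * w i := by
          have hsplit : (WithLp.toLp 2 (fun k => c + t * (if k = i then (1:ℝ) else 0)) : Vec d1)
              = cvec + t • EuclideanSpace.single i (1:ℝ) := by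
            ext k
            have h9 : (cvec + t • EuclideanSpace.single i (1:ℝ)) k
                = c + t * (EuclideanSpace.single i (1:ℝ)) k := rfl
            rw [h9, EuclideanSpace.single_apply]
          rw [hsplit, map_add, map_smul]
          rfl
        rw [hlin] at hmem
        have hwne : -(w i) ≠ 0 := by simpa using ne_of_lt hneg
        have h7 : t * (-(w i)) = f cvec - v0 + 1 := by
          rw [htdef]
          exact div_mul_cancel₀ _ hwne
        nlinarith [h7, hmem]
      have hS : 0 < ∑ i, w i := by
        rcases lt_or_eq_of_le (Finset.sum_nonneg fun i _ => hw_nonneg i) with h | h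
        · exact h
        · exfalso
          have hzero : ∀ i, w i = 0 := by
            intro i
            have h1 : ∀ j ∈ Finset.univ, 0 ≤ w j := fun j _ => hw_nonneg j
            have := (Finset.sum_eq_zero_iff_of_nonneg h1).mp h.symm
            exact this i (Finset.mem_univ i)
          have hf0 : ∀ u, f u = 0 := by
            intro u
            rw [hfdecomp]
            simp [hzero]
          have h1 := hfN _ hcN
          have h2 := hfK _ ⟨_, uniformPt_mem_simplex hd2, rfl⟩
          rw [hf0] at h1 h2
          linarith
      set x := (∑ i, w i)⁻¹ • w with hx
      have hxs' : x ∈ simplexSet d1 := by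
        constructor
        · intro i
          have : x i = (∑ k, w k)⁻¹ * w i := rfl
          rw [this]
          exact mul_nonneg (inv_nonneg.mpr hS.le) (hw_nonneg i)
        · have : ∑ i, x i = (∑ k, w k)⁻¹ * ∑ i, w i := by
            rw [Finset.mul_sum]; rfl
          rw [this, inv_mul_cancel₀ hS.ne']
      have hxφ : φ x < c := by
        rw [Finset.sup'_lt_iff]
        intro j _
        rw [← payoff_single_right, payoff_eq_sum_left]
        have h1 : f (mv A (EuclideanSpace.single j (1:ℝ))) < u0 :=
          hfK _ ⟨_, single_mem_simplex j, (mv_eq_toEuclideanLin A _).symm⟩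
        have h2 : v0 < f cvec := hfN _ hcN
        have h3 : f cvec = c * ∑ i, w i := by
          rw [hfdecomp, Finset.mul_sum]
        have h4 : f (mv A (EuclideanSpace.single j (1:ℝ)))
            = ∑ i, mv A (EuclideanSpace.single j (1:ℝ)) i * w i := hfdecomp _
        have h5 : ∑ i, x i * mv A (EuclideanSpace.single j (1:ℝ)) i
            = (∑ k, w k)⁻¹ * ∑ i, mv A (EuclideanSpace.single j (1:ℝ)) i * w i := by
          rw [Finset.mul_sum]
          exact Finset.sum_congr rfl fun i _ => by
            have : x i = (∑ k, w k)⁻¹ * w i := rfl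
            rw [this]; ring
        rw [h5]
        rw [← h4]
        have hlt : f (mv A (EuclideanSpace.single j (1:ℝ))) < c * ∑ i, w i := by
          rw [← h3]; linarith
        calc (∑ k, w k)⁻¹ * f (mv A (EuclideanSpace.single j (1:ℝ)))
            < (∑ k, w k)⁻¹ * (c * ∑ i, w i) := by
              apply mul_lt_mul_of_pos_left hlt (inv_pos.mpr hS)
          _ = c := by field_simp
      have := hxsmin hxs'
      have : v2 ≤ φ x := this
      linarith
  -- assemble saddle point
  refine ⟨xs, hxs, ys, hys, ?_, ?_⟩
  · intro y' hy'
    have h1 : payoff A xs y' ≤ v2 := hpay_le xs y' hy'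
    have h2 : v1 ≤ payoff A xs ys := hpay_ge ys xs hxs
    linarith
  · intro x' hx'
    have h1 : payoff A xs ys ≤ v2 := hpay_le xs ys hys
    have h2 : v1 ≤ payoff A x' ys := hpay_ge ys x' hx'
    linarith

end Minimax
section FopMain
variable {d d1 d2 : ℕ}

/-- Subtract a constant from every coordinate. -/
def subC {d : ℕ} (q : Vec d) (c : ℝ) : Vec d := WithLp.toLp 2 (fun i => q i - c)

/-- Constant vector. -/
def constV (d : ℕ) (c : ℝ) : Vec d := WithLp.toLp 2 (fun _ => c)

@[simp] lemma subC_apply (q : Vec d) (c : ℝ) (i : Fin d) : subC q c i = q i - c := rfl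
@[simp] lemma constV_apply (c : ℝ) (i : Fin d) : constV d c i = c := rfl

lemma sum_sq_center_le' (hd : 0 < d) {x' : Vec d} (hx : ∑ i, x' i = 1) (q : Vec d) :
    ∑ i, (q i - ∑ k, x' k * q k) ^ 2 ≤ d * (∑ i, x' i ^ 2) * ∑ i, q i ^ 2 := by
  have hdR : (0:ℝ) < d := by exact_mod_cast hd
  set t := ∑ k, q k with ht
  set Q := ∑ i, q i ^ 2 with hQ
  set s := ∑ i, x' i ^ 2 with hs
  set qp : Fin d → ℝ := fun i => q i - (t/d) * 1 with hqp
  set xp : Fin d → ℝ := fun i => x' i - (1/d) * 1 with hxp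
  set Qp := ∑ i, qp i ^ 2 with hQp
  set Ee := ∑ i, xp i ^ 2 with hE
  set Ip := ∑ i, xp i * qp i with hIp
  have hones : ∑ _i : Fin d, (1:ℝ) ^ 2 = d := by simp
  have hq1 : ∑ i, q i * 1 = t := by simp [ht]
  have hx1 : ∑ i, x' i * 1 = 1 := by simpa using hx
  have hQpeq : Qp = Q - t ^ 2 / d := by
    rw [hQp, hqp, sum_sq_sub q (fun _ => 1) (t/d), hones, hq1, ← hQ]
    field_simp; ring
  have hEeq : Ee = s - 1 / d := by
    rw [hE, hxp, sum_sq_sub x' (fun _ => 1) (1/d), hones, hx1, ← hs]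
    field_simp; ring
  have hc0 : ∑ k, x' k * q k = Ip + t / d := by
    rw [hIp]
    have hterm : ∀ i : Fin d, xp i * qp i
        = x' i * q i - (t/d) * x' i - (1/d) * q i + (t/d) * (1/d) := by
      intro i; rw [hxp, hqp]; ring
    rw [Finset.sum_congr rfl fun i _ => hterm i]
    rw [Finset.sum_add_distrib, Finset.sum_sub_distrib, Finset.sum_sub_distrib,
      ← Finset.mul_sum, ← Finset.mul_sum, hx, ← ht]
    simp only [Finset.sum_const, Finset.card_univ, Fintype.card_fin, nsmul_eq_mul]
    field_simp
    ring
  have hqps : ∑ i, qp i = 0 := by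
    simp only [hqp, mul_one]
    rw [Finset.sum_sub_distrib, ← ht]
    simp only [Finset.sum_const, Finset.card_univ, Fintype.card_fin, nsmul_eq_mul]
    field_simp
    ring
  have hLHS : ∑ i, (q i - ∑ k, x' k * q k) ^ 2 = Qp + d * Ip ^ 2 := by
    have hpt : ∀ i, q i - ∑ k, x' k * q k = qp i - Ip * 1 := by
      intro i; rw [hc0, hqp]; ring
    rw [Finset.sum_congr rfl fun i _ => by rw [hpt i]]
    rw [sum_sq_sub qp (fun _ => 1) Ip, hones, ← hQp]
    have : ∑ i, qp i * 1 = 0 := by simpa using hqps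
    rw [this]
    ring
  have hCS : Ip ^ 2 ≤ Ee * Qp := by
    rw [hIp, hE, hQp]
    exact Finset.sum_mul_sq_le_sq_mul_sq _ _ _
  have hQn : 0 ≤ Q := Finset.sum_nonneg fun i _ => sq_nonneg _
  have hQpn : 0 ≤ Qp := Finset.sum_nonneg fun i _ => sq_nonneg _
  have hEn : 0 ≤ Ee := Finset.sum_nonneg fun i _ => sq_nonneg _
  have hq2 : Qp ≤ Q := by
    rw [hQpeq]
    have : 0 ≤ t ^ 2 / d := by positivity
    linarith
  have hs2 : (d:ℝ) * s = d * Ee + 1 := by rw [hEeq]; field_simp; ring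
  rw [hLHS]
  have hEQ : Ee * Qp ≤ Ee * Q := mul_le_mul_of_nonneg_left hq2 hEn
  nlinarith [mul_le_mul_of_nonneg_left hCS hdR.le, mul_le_mul_of_nonneg_left hEQ hdR.le]

lemma norm_center_le' (hd : 0 < d) {x' : Vec d} (hx : x' ∈ simplexSet d) (q : Vec d) :
    ‖subC q ⟪x', q⟫‖ ≤ Real.sqrt d * ‖q‖ := by
  have hdR : (0:ℝ) < d := by exact_mod_cast hd
  have hinner : ⟪x', q⟫ = ∑ k, x' k * q k := by
    rw [real_inner_comm]
    simp only [PiLp.inner_apply, RCLike.inner_apply, conj_trivial]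
  have hsq : ‖subC q ⟪x', q⟫‖ ^ 2 ≤ d * ‖q‖ ^ 2 := by
    rw [norm_sq_eq_sum, norm_sq_eq_sum]
    calc ∑ i, (subC q ⟪x', q⟫ i) ^ 2
        = ∑ i, (q i - ∑ k, x' k * q k) ^ 2 :=
          Finset.sum_congr rfl fun i _ => by rw [subC_apply, hinner]
      _ ≤ d * (∑ i, x' i ^ 2) * ∑ i, q i ^ 2 := sum_sq_center_le' hd hx.2 q
      _ ≤ d * 1 * ∑ i, q i ^ 2 := by
          apply mul_le_mul_of_nonneg_right _ (Finset.sum_nonneg fun i _ => sq_nonneg _)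
          apply mul_le_mul_of_nonneg_left _ hdR.le
          have := norm_le_one_of_simplex hx
          have h2 := norm_sq_eq_sum x'
          nlinarith [norm_nonneg x']
      _ = d * ∑ i, q i ^ 2 := by ring
  have h1 : 0 ≤ Real.sqrt d * ‖q‖ := by positivity
  nlinarith [Real.sq_sqrt hdR.le, Real.sqrt_nonneg (d:ℝ), norm_nonneg q,
    norm_nonneg (subC q ⟪x', q⟫)]

lemma norm_const_vec (c : ℝ) : ‖constV d c‖ = Real.sqrt d * |c| := by
  have h : ‖constV d c‖ ^ 2 = d * c ^ 2 := by
    rw [norm_sq_eq_sum]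
    simp
  have h2 : ‖constV d c‖ = Real.sqrt (d * c ^ 2) := by
    rw [← h, Real.sqrt_sq (norm_nonneg _)]
  rw [h2, Real.sqrt_mul (by positivity), Real.sqrt_sq_eq_abs]

lemma mv_sub (A : Matrix (Fin d1) (Fin d2) ℝ) (y y' : Vec d2) :
    mv A (y - y') = mv A y - mv A y' := by
  ext i
  simp only [mv, PiLp.sub_apply]
  rw [← Finset.sum_sub_distrib]
  exact Finset.sum_congr rfl fun j _ => by ring

lemma mvT_sub (A : Matrix (Fin d1) (Fin d2) ℝ) (x x' : Vec d1) :
    mvT A (x - x') = mvT A x - mvT A x' := by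
  ext j
  simp only [mvT, PiLp.sub_apply]
  rw [← Finset.sum_sub_distrib]
  exact Finset.sum_congr rfl fun i _ => by ring

lemma inner_sub_const (q : Vec d) (c : ℝ) (u : Vec d) :
    ⟪subC q c, u⟫ = ⟪q, u⟫ - c * ∑ i, u i := by
  simp only [PiLp.inner_apply, RCLike.inner_apply, conj_trivial]
  rw [Finset.mul_sum, ← Finset.sum_sub_distrib]
  exact Finset.sum_congr rfl fun i _ => by rw [subC_apply]; ring

lemma inner_Fop (A : Matrix (Fin d1) (Fin d2) ℝ) (z w : Joint d1 d2) :
    ⟪Fop A z, w⟫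
      = ⟪mv A (normPart (yPart z)), xPart w⟫
        - payoff A (normPart (xPart z)) (normPart (yPart z)) * (∑ i, xPart w i)
        - ⟪mvT A (normPart (xPart z)), yPart w⟫
        + payoff A (normPart (xPart z)) (normPart (yPart z)) * (∑ j, yPart w j) := by
  set x := normPart (xPart z)
  set y := normPart (yPart z)
  set v := payoff A x y with hv
  rw [inner_split]
  have h1 : xPart (Fop A z) = subC (mv A y) v := rfl
  have h2 : yPart (Fop A z) = subC (-(mvT A x)) (-v) := by
    ext j
    show -(∑ i, A i j * x i) + v = (-(mvT A x)) j - (-v)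
    have : (-(mvT A x)) j = -(mvT A x j) := rfl
    rw [this, mvT]
    ring
  rw [h1, h2, inner_sub_const, inner_sub_const]
  have h3 : ⟪-(mvT A x), yPart w⟫ = -⟪mvT A x, yPart w⟫ := inner_neg_left _ _
  rw [h3]
  ring

lemma smul_normPart {u : Vec d} (hu : u ∈ clippedSet d) :
    (∑ i, u i) • normPart u = u := by
  rw [normPart_eq hu, smul_smul, mul_inv_cancel₀ (sum_pos_of_clipped hu).ne', one_smul]

lemma sum_normPart {u : Vec d} (hu : u ∈ clippedSet d) :
    ∑ i, normPart u i = 1 := (normPart_mem_simplex hu).2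

lemma inner_Fop_self (A : Matrix (Fin d1) (Fin d2) ℝ) {z : Joint d1 d2}
    (hz : z ∈ ZgeSet d1 d2) : ⟪Fop A z, z⟫ = 0 := by
  set x := normPart (xPart z) with hx
  set y := normPart (yPart z) with hy
  set v := payoff A x y with hv
  rw [inner_Fop]
  have ha : 0 < ∑ i, xPart z i := sum_pos_of_clipped hz.1
  have hb : 0 < ∑ j, yPart z j := sum_pos_of_clipped hz.2
  have h1 : ⟪mv A y, xPart z⟫ = (∑ i, xPart z i) * v := by
    conv_lhs => rw [← smul_normPart hz.1]
    rw [inner_smul_right]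
    congr 1
    rw [real_inner_comm, inner_mv]
  have h2 : ⟪mvT A x, yPart z⟫ = (∑ j, yPart z j) * v := by
    conv_lhs => rw [← smul_normPart hz.2]
    rw [inner_smul_right]
    congr 1
    rw [inner_mvT]
  rw [h1, h2]
  ring

lemma inner_Fop_joinPt (A : Matrix (Fin d1) (Fin d2) ℝ) (z : Joint d1 d2)
    {x' : Vec d1} {y' : Vec d2} (hx' : ∑ i, x' i = 1) (hy' : ∑ j, y' j = 1) :
    ⟪Fop A z, joinPt x' y'⟫
      = payoff A x' (normPart (yPart z)) - payoff A (normPart (xPart z)) y' := by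
  rw [inner_Fop, xPart_joinPt, yPart_joinPt, hx', hy']
  rw [real_inner_comm, inner_mv, inner_mvT]
  ring

/-- Minty-type inequality at a saddle point. -/
lemma minty (A : Matrix (Fin d1) (Fin d2) ℝ) {z : Joint d1 d2} (hz : z ∈ ZgeSet d1 d2)
    {xs : Vec d1} {ys : Vec d2} (hxs : xs ∈ simplexSet d1) (hys : ys ∈ simplexSet d2)
    (hsad1 : ∀ y' ∈ simplexSet d2, payoff A xs y' ≤ payoff A xs ys)
    (hsad2 : ∀ x' ∈ simplexSet d1, payoff A xs ys ≤ payoff A x' ys) :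
    0 ≤ ⟪Fop A z, z - joinPt xs ys⟫ := by
  rw [inner_sub_right, inner_Fop_self A hz, inner_Fop_joinPt A z hxs.2 hys.2]
  have h1 := hsad1 _ (normPart_mem_simplex hz.2)
  have h2 := hsad2 _ (normPart_mem_simplex hz.1)
  linarith

set_option maxHeartbeats 1600000 in
/-- F is Lipschitz with constant L_F on the clipped set. -/
lemma Fop_lipschitz (hd1 : 0 < d1) (hd2 : 0 < d2) (A : Matrix (Fin d1) (Fin d2) ℝ)
    {z z' : Joint d1 d2} (hz : z ∈ ZgeSet d1 d2) (hz' : z' ∈ ZgeSet d1 d2) :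
    ‖Fop A z - Fop A z'‖ ≤ LF A * ‖z - z'‖ := by
  have hd1R : (0:ℝ) < d1 := by exact_mod_cast hd1
  have hd2R : (0:ℝ) < d2 := by exact_mod_cast hd2
  set α := opNorm A with hα
  have hαn : 0 ≤ α := opNorm_nonneg A
  set x₁ := normPart (xPart z) with hx₁
  set x₂ := normPart (xPart z') with hx₂
  set y₁ := normPart (yPart z) with hy₁
  set y₂ := normPart (yPart z') with hy₂
  have hx₁s : x₁ ∈ simplexSet d1 := normPart_mem_simplex hz.1
  have hx₂s : x₂ ∈ simplexSet d1 := normPart_mem_simplex hz'.1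
  have hy₁s : y₁ ∈ simplexSet d2 := normPart_mem_simplex hz.2
  have hy₂s : y₂ ∈ simplexSet d2 := normPart_mem_simplex hz'.2
  set q : Vec d1 := mv A (y₁ - y₂) with hqdef
  set r : Vec d2 := mvT A (x₁ - x₂) with hrdef
  set c1 := payoff A (x₁ - x₂) y₁ with hc1def
  set c2 := payoff A x₁ (y₁ - y₂) with hc2def
  set v₁ := payoff A x₁ y₁ with hv₁
  set v₂ := payoff A x₂ y₂ with hv₂
  -- difference of payoffs, two splittings
  have hvdiff1 : v₁ - v₂ = c1 + ⟪x₂, q⟫ := by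
    rw [hqdef, inner_mv, hc1def]
    have e1 : payoff A x₁ y₁ - payoff A x₂ y₁ = payoff A (x₁ - x₂) y₁ := payoff_sub_left ..
    have e2 : payoff A x₂ y₁ - payoff A x₂ y₂ = payoff A x₂ (y₁ - y₂) := payoff_sub_right ..
    linarith
  have hvdiff2 : v₁ - v₂ = c2 + ⟪y₂, r⟫ := by
    rw [hrdef, real_inner_comm, inner_mvT, hc2def]
    have e1 : payoff A x₁ y₁ - payoff A x₁ y₂ = payoff A x₁ (y₁ - y₂) := payoff_sub_right ..
    have e2 : payoff A x₁ y₂ - payoff A x₂ y₂ = payoff A (x₁ - x₂) y₂ := payoff_sub_left ..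
    linarith
  -- block decompositions
  have hxdec : xPart (Fop A z - Fop A z')
      = subC q ⟪x₂, q⟫ - constV d1 c1 := by
    ext i
    have hcoord : xPart (Fop A z - Fop A z') i
        = (mv A y₁ i - v₁) - (mv A y₂ i - v₂) := rfl
    have hqi : q i = mv A y₁ i - mv A y₂ i := by
      rw [hqdef, mv_sub]; rfl
    have : (subC q ⟪x₂, q⟫ - constV d1 c1) i
        = q i - ⟪x₂, q⟫ - c1 := rfl
    rw [hcoord, this, hqi]
    linarith [hvdiff1]
  have hydec : yPart (Fop A z - Fop A z')
      = -(subC r ⟪y₂, r⟫ - constV d2 c2) := by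
    ext j
    have hcoord : yPart (Fop A z - Fop A z') j
        = (-(mvT A x₁ j) + v₁) - (-(mvT A x₂ j) + v₂) := rfl
    have hrj : r j = mvT A x₁ j - mvT A x₂ j := by
      rw [hrdef, mvT_sub]; rfl
    have : (-(subC r ⟪y₂, r⟫ - constV d2 c2)) j
        = -(r j - ⟪y₂, r⟫ - c2) := rfl
    rw [hcoord, this, hrj]
    linarith [hvdiff2]
  -- norms of parts of z - z'
  set p := ‖xPart (z - z')‖ with hp
  set qn := ‖yPart (z - z')‖ with hqn
  have hpn : 0 ≤ p := norm_nonneg _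
  have hqnn : 0 ≤ qn := norm_nonneg _
  -- bounds
  have hxlip : ‖x₁ - x₂‖ ≤ Real.sqrt d1 * p := by
    rw [hx₁, hx₂, hp, xPart_sub]
    exact normPart_lipschitz hd1 hz.1 hz'.1
  have hylip : ‖y₁ - y₂‖ ≤ Real.sqrt d2 * qn := by
    rw [hy₁, hy₂, hqn, yPart_sub]
    exact normPart_lipschitz hd2 hz.2 hz'.2
  have hqbound : ‖q‖ ≤ α * (Real.sqrt d2 * qn) := by
    calc ‖q‖ ≤ α * ‖y₁ - y₂‖ := norm_mv_le A _
      _ ≤ α * (Real.sqrt d2 * qn) := mul_le_mul_of_nonneg_left hylip hαn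
  have hrbound : ‖r‖ ≤ α * (Real.sqrt d1 * p) := by
    calc ‖r‖ ≤ α * ‖x₁ - x₂‖ := norm_mvT_le A _
      _ ≤ α * (Real.sqrt d1 * p) := mul_le_mul_of_nonneg_left hxlip hαn
  have hc1bound : |c1| ≤ α * (Real.sqrt d1 * p) := by
    calc |c1| ≤ α * ‖x₁ - x₂‖ * ‖y₁‖ := payoff_abs_le ..
      _ ≤ α * ‖x₁ - x₂‖ * 1 := by
          apply mul_le_mul_of_nonneg_left (norm_le_one_of_simplex hy₁s)
          exact mul_nonneg hαn (norm_nonneg _)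
      _ = α * ‖x₁ - x₂‖ := mul_one _
      _ ≤ α * (Real.sqrt d1 * p) := mul_le_mul_of_nonneg_left hxlip hαn
  have hc2bound : |c2| ≤ α * (Real.sqrt d2 * qn) := by
    have h0 : |c2| ≤ α * ‖x₁‖ * ‖y₁ - y₂‖ := payoff_abs_le ..
    calc |c2| ≤ α * ‖x₁‖ * ‖y₁ - y₂‖ := h0
      _ ≤ α * 1 * ‖y₁ - y₂‖ := by
          apply mul_le_mul_of_nonneg_right _ (norm_nonneg _)
          exact mul_le_mul_of_nonneg_left (norm_le_one_of_simplex hx₁s) hαn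
      _ = α * ‖y₁ - y₂‖ := by ring
      _ ≤ α * (Real.sqrt d2 * qn) := mul_le_mul_of_nonneg_left hylip hαn
  set E := α * (Real.sqrt d1 * p) + α * (Real.sqrt d2 * qn) with hE
  have hEn : 0 ≤ E := by positivity
  have hxnorm : ‖xPart (Fop A z - Fop A z')‖ ≤ Real.sqrt d1 * E := by
    rw [hxdec]
    calc ‖subC q ⟪x₂, q⟫ - constV d1 c1‖
        ≤ ‖subC q ⟪x₂, q⟫‖ + ‖constV d1 c1‖ := norm_sub_le _ _
      _ ≤ Real.sqrt d1 * ‖q‖ + Real.sqrt d1 * |c1| := by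
          apply add_le_add (norm_center_le' hd1 hx₂s q)
          rw [norm_const_vec]
      _ ≤ Real.sqrt d1 * (α * (Real.sqrt d2 * qn)) + Real.sqrt d1 * (α * (Real.sqrt d1 * p)) := by
          apply add_le_add <;>
            exact mul_le_mul_of_nonneg_left (by assumption) (Real.sqrt_nonneg _)
      _ = Real.sqrt d1 * E := by rw [hE]; ring
  have hynorm : ‖yPart (Fop A z - Fop A z')‖ ≤ Real.sqrt d2 * E := by
    rw [hydec, norm_neg]
    calc ‖subC r ⟪y₂, r⟫ - constV d2 c2‖
        ≤ ‖subC r ⟪y₂, r⟫‖ + ‖constV d2 c2‖ := norm_sub_le _ _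
      _ ≤ Real.sqrt d2 * ‖r‖ + Real.sqrt d2 * |c2| := by
          apply add_le_add (norm_center_le' hd2 hy₂s r)
          rw [norm_const_vec]
      _ ≤ Real.sqrt d2 * (α * (Real.sqrt d1 * p)) + Real.sqrt d2 * (α * (Real.sqrt d2 * qn)) := by
          apply add_le_add <;>
            exact mul_le_mul_of_nonneg_left (by assumption) (Real.sqrt_nonneg _)
      _ = Real.sqrt d2 * E := by rw [hE]; ring
  -- combine
  have hznorm : p ^ 2 + qn ^ 2 = ‖z - z'‖ ^ 2 := by
    rw [hp, hqn]; exact (norm_sq_split _).symm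
  clear_value α x₁ x₂ y₁ y₂ q r c1 c2 v₁ v₂ p qn E
  have hsq1 := Real.sq_sqrt hd1R.le
  have hsq2 := Real.sq_sqrt hd2R.le
  have htotal : ‖Fop A z - Fop A z'‖ ^ 2 ≤ ((d1 + d2 : ℝ) * α) ^ 2 * ‖z - z'‖ ^ 2 := by
    have h1 : ‖Fop A z - Fop A z'‖ ^ 2
        = ‖xPart (Fop A z - Fop A z')‖ ^ 2 + ‖yPart (Fop A z - Fop A z')‖ ^ 2 :=
      norm_sq_split _
    have h2 : ‖xPart (Fop A z - Fop A z')‖ ^ 2 ≤ (d1:ℝ) * E ^ 2 := by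
      calc ‖xPart (Fop A z - Fop A z')‖ ^ 2
          ≤ (Real.sqrt d1 * E) ^ 2 := by
            apply pow_le_pow_left₀ (norm_nonneg _) hxnorm
        _ = (d1:ℝ) * E ^ 2 := by rw [mul_pow, Real.sq_sqrt hd1R.le]
    have h3 : ‖yPart (Fop A z - Fop A z')‖ ^ 2 ≤ (d2:ℝ) * E ^ 2 := by
      calc ‖yPart (Fop A z - Fop A z')‖ ^ 2
          ≤ (Real.sqrt d2 * E) ^ 2 := by
            apply pow_le_pow_left₀ (norm_nonneg _) hynorm
        _ = (d2:ℝ) * E ^ 2 := by rw [mul_pow, Real.sq_sqrt hd2R.le]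
    have h4 : E ^ 2 ≤ α ^ 2 * ((d1:ℝ) + d2) * (p ^ 2 + qn ^ 2) := by
      rw [hE]
      have key : (Real.sqrt d1 * p + Real.sqrt d2 * qn) ^ 2
          ≤ (Real.sqrt d1 ^ 2 + Real.sqrt d2 ^ 2) * (p ^ 2 + qn ^ 2) := by
        nlinarith [sq_nonneg (Real.sqrt d2 * p - Real.sqrt d1 * qn)]
      calc (α * (Real.sqrt d1 * p) + α * (Real.sqrt d2 * qn)) ^ 2
          = α ^ 2 * (Real.sqrt d1 * p + Real.sqrt d2 * qn) ^ 2 := by ring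
        _ ≤ α ^ 2 * ((Real.sqrt d1 ^ 2 + Real.sqrt d2 ^ 2) * (p ^ 2 + qn ^ 2)) :=
            mul_le_mul_of_nonneg_left key (sq_nonneg α)
        _ = α ^ 2 * ((d1:ℝ) + d2) * (p ^ 2 + qn ^ 2) := by rw [hsq1, hsq2]; ring
    rw [h1, ← hznorm]
    calc ‖xPart (Fop A z - Fop A z')‖ ^ 2 + ‖yPart (Fop A z - Fop A z')‖ ^ 2
        ≤ (d1:ℝ) * E ^ 2 + (d2:ℝ) * E ^ 2 := add_le_add h2 h3
      _ = ((d1:ℝ) + d2) * E ^ 2 := by ring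
      _ ≤ ((d1:ℝ) + d2) * (α ^ 2 * ((d1:ℝ) + d2) * (p ^ 2 + qn ^ 2)) :=
          mul_le_mul_of_nonneg_left h4 (by positivity)
      _ = ((d1 + d2 : ℝ) * α) ^ 2 * (p ^ 2 + qn ^ 2) := by ring
  have hfin : ‖Fop A z - Fop A z'‖ ≤ ((d1 + d2 : ℝ) * α) * ‖z - z'‖ := by
    have h5 : (0:ℝ) ≤ ((d1 + d2 : ℝ) * α) * ‖z - z'‖ :=
      mul_nonneg (mul_nonneg (by positivity) hαn) (norm_nonneg _)
    calc ‖Fop A z - Fop A z'‖ = Real.sqrt (‖Fop A z - Fop A z'‖ ^ 2) :=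
          (Real.sqrt_sq (norm_nonneg _)).symm
      _ ≤ Real.sqrt (((d1 + d2 : ℝ) * α) ^ 2 * ‖z - z'‖ ^ 2) := Real.sqrt_le_sqrt htotal
      _ = ((d1 + d2 : ℝ) * α) * ‖z - z'‖ := by
          rw [show ((d1 + d2 : ℝ) * α) ^ 2 * ‖z - z'‖ ^ 2
              = (((d1 + d2 : ℝ) * α) * ‖z - z'‖) ^ 2 by ring, Real.sqrt_sq h5]
  calc ‖Fop A z - Fop A z'‖ ≤ ((d1 + d2 : ℝ) * α) * ‖z - z'‖ := hfin
    _ ≤ LF A * ‖z - z'‖ := by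
        apply mul_le_mul_of_nonneg_right _ (norm_nonneg _)
        rw [LF]
        have hsqrt6 : (2:ℝ) ≤ Real.sqrt 6 := by
          nlinarith [Real.sq_sqrt (by norm_num : (0:ℝ) ≤ 6), Real.sqrt_nonneg (6:ℝ)]
        have hmax : (d1:ℝ) + d2 ≤ 2 * max (d1:ℝ) (d2:ℝ) := by
          have := le_max_left (d1:ℝ) (d2:ℝ)
          have := le_max_right (d1:ℝ) (d2:ℝ)
          linarith
        have hmaxn : 0 ≤ max (d1:ℝ) (d2:ℝ) := le_trans (by positivity) (le_max_left _ _)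
        calc ((d1:ℝ) + d2) * α ≤ (2 * max (d1:ℝ) (d2:ℝ)) * α :=
              mul_le_mul_of_nonneg_right hmax hαn
          _ ≤ (Real.sqrt 6 * max (d1:ℝ) (d2:ℝ)) * α := by
              apply mul_le_mul_of_nonneg_right _ hαn
              exact mul_le_mul_of_nonneg_right hsqrt6 hmaxn
          _ = Real.sqrt 6 * opNorm A * max (d1:ℝ) (d2:ℝ) := by rw [hα]; ring

lemma abs_sup'_sub (hne : (Finset.univ : Finset (Fin d)).Nonempty)
    (f g : Fin d → ℝ) {c : ℝ} (h : ∀ j, |f j - g j| ≤ c) :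
    |Finset.univ.sup' hne f - Finset.univ.sup' hne g| ≤ c := by
  have h1 : Finset.univ.sup' hne f ≤ Finset.univ.sup' hne g + c := by
    apply Finset.sup'_le
    intro j _
    have := (abs_le.mp (h j)).2
    have hg := Finset.le_sup' g (Finset.mem_univ j)
    linarith
  have h2 : Finset.univ.sup' hne g ≤ Finset.univ.sup' hne f + c := by
    apply Finset.sup'_le
    intro j _
    have := (abs_le.mp (h j)).1
    have hf := Finset.le_sup' f (Finset.mem_univ j)
    linarith
  rw [abs_le]
  constructor <;> linarith

lemma abs_inf'_sub (hne : (Finset.univ : Finset (Fin d)).Nonempty)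
    (f g : Fin d → ℝ) {c : ℝ} (h : ∀ j, |f j - g j| ≤ c) :
    |Finset.univ.inf' hne f - Finset.univ.inf' hne g| ≤ c := by
  have h1 : Finset.univ.inf' hne f ≤ Finset.univ.inf' hne g + c := by
    obtain ⟨j, _, hj⟩ := Finset.exists_mem_eq_inf' hne g
    rw [hj]
    have := (abs_le.mp (h j)).2
    have hf := Finset.inf'_le f (Finset.mem_univ j)
    linarith
  have h2 : Finset.univ.inf' hne g ≤ Finset.univ.inf' hne f + c := by
    obtain ⟨j, _, hj⟩ := Finset.exists_mem_eq_inf' hne f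
    rw [hj]
    have := (abs_le.mp (h j)).1
    have hg := Finset.inf'_le g (Finset.mem_univ j)
    linarith
  rw [abs_le]
  constructor <;> linarith

lemma dualGap_lipschitz (hd1 : 0 < d1) (hd2 : 0 < d2) (A : Matrix (Fin d1) (Fin d2) ℝ)
    (x x'' : Vec d1) (y y'' : Vec d2) :
    |dualGap A x y - dualGap A x'' y''|
      ≤ opNorm A * ‖x - x''‖ + opNorm A * ‖y - y''‖ := by
  haveI : Nonempty (Fin d1) := Fin.pos_iff_nonempty.mp hd1
  haveI : Nonempty (Fin d2) := Fin.pos_iff_nonempty.mp hd2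
  rw [dualGap_eq hd1 hd2, dualGap_eq hd1 hd2]
  have hsup : |Finset.univ.sup'
        (by simpa [Finset.univ_nonempty_iff, Fin.pos_iff_nonempty] using hd2)
        (fun j => mvT A x j)
      - Finset.univ.sup'
        (by simpa [Finset.univ_nonempty_iff, Fin.pos_iff_nonempty] using hd2)
        (fun j => mvT A x'' j)| ≤ opNorm A * ‖x - x''‖ := by
    apply abs_sup'_sub
    intro j
    have h1 : mvT A x j - mvT A x'' j = mvT A (x - x'') j := by
      rw [mvT_sub]; rfl
    rw [h1]
    calc |mvT A (x - x'') j| ≤ ‖mvT A (x - x'')‖ := abs_coord_le _ j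
      _ ≤ opNorm A * ‖x - x''‖ := norm_mvT_le ..
  have hinf : |Finset.univ.inf'
        (by simpa [Finset.univ_nonempty_iff, Fin.pos_iff_nonempty] using hd1)
        (fun i => mv A y i)
      - Finset.univ.inf'
        (by simpa [Finset.univ_nonempty_iff, Fin.pos_iff_nonempty] using hd1)
        (fun i => mv A y'' i)| ≤ opNorm A * ‖y - y''‖ := by
    apply abs_inf'_sub
    intro i
    have h1 : mv A y i - mv A y'' i = mv A (y - y'') i := by
      rw [mv_sub]; rfl
    rw [h1]
    calc |mv A (y - y'') i| ≤ ‖mv A (y - y'')‖ := abs_coord_le _ i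
      _ ≤ opNorm A * ‖y - y''‖ := norm_mv_le ..
  have hre : (Finset.univ.sup'
        (by simpa [Finset.univ_nonempty_iff, Fin.pos_iff_nonempty] using hd2)
        (fun j => mvT A x j)
      - Finset.univ.inf'
        (by simpa [Finset.univ_nonempty_iff, Fin.pos_iff_nonempty] using hd1)
        (fun i => mv A y i))
      - (Finset.univ.sup'
        (by simpa [Finset.univ_nonempty_iff, Fin.pos_iff_nonempty] using hd2)
        (fun j => mvT A x'' j)
      - Finset.univ.inf'
        (by simpa [Finset.univ_nonempty_iff, Fin.pos_iff_nonempty] using hd1)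
        (fun i => mv A y'' i))
      = (Finset.univ.sup'
        (by simpa [Finset.univ_nonempty_iff, Fin.pos_iff_nonempty] using hd2)
        (fun j => mvT A x j)
      - Finset.univ.sup'
        (by simpa [Finset.univ_nonempty_iff, Fin.pos_iff_nonempty] using hd2)
        (fun j => mvT A x'' j))
      - (Finset.univ.inf'
        (by simpa [Finset.univ_nonempty_iff, Fin.pos_iff_nonempty] using hd1)
        (fun i => mv A y i)
      - Finset.univ.inf'
        (by simpa [Finset.univ_nonempty_iff, Fin.pos_iff_nonempty] using hd1)
        (fun i => mv A y'' i)) := by ring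
  rw [hre]
  exact (abs_sub _ _).trans (add_le_add hsup hinf)

end FopMain
section MainProof
variable {d d1 d2 : ℕ}

lemma payoff_le_sup' (hne : (Finset.univ : Finset (Fin d2)).Nonempty)
    (A : Matrix (Fin d1) (Fin d2) ℝ) (x : Vec d1) {y' : Vec d2} (hy' : y' ∈ simplexSet d2) :
    payoff A x y' ≤ Finset.univ.sup' hne (fun j => mvT A x j) := by
  rw [payoff_eq_sum_right]
  calc ∑ j, y' j * mvT A x j
      ≤ ∑ j, y' j * Finset.univ.sup' hne (fun j => mvT A x j) := by
        apply Finset.sum_le_sum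
        intro j _
        exact mul_le_mul_of_nonneg_left (Finset.le_sup' _ (Finset.mem_univ j)) (hy'.1 j)
    _ = Finset.univ.sup' hne (fun j => mvT A x j) := by rw [← Finset.sum_mul, hy'.2, one_mul]

lemma inf'_le_payoff (hne : (Finset.univ : Finset (Fin d1)).Nonempty)
    (A : Matrix (Fin d1) (Fin d2) ℝ) {x' : Vec d1} (y : Vec d2) (hx' : x' ∈ simplexSet d1) :
    Finset.univ.inf' hne (fun i => mv A y i) ≤ payoff A x' y := by
  rw [payoff_eq_sum_left]
  calc Finset.univ.inf' hne (fun i => mv A y i)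
      = ∑ i, x' i * Finset.univ.inf' hne (fun i => mv A y i) := by
        rw [← Finset.sum_mul, hx'.2, one_mul]
    _ ≤ ∑ i, x' i * mv A y i := by
        apply Finset.sum_le_sum
        intro i _
        exact mul_le_mul_of_nonneg_left (Finset.inf'_le _ (Finset.mem_univ i)) (hx'.1 i)

/-- Any VI solution induces a Nash equilibrium. -/
lemma sol_isNash (hd1 : 0 < d1) (hd2 : 0 < d2) (A : Matrix (Fin d1) (Fin d2) ℝ)
    {p : Joint d1 d2} (hp : p ∈ SolSet A) :
    IsNash A (normPart (xPart p)) (normPart (yPart p)) := by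
  haveI : Nonempty (Fin d1) := Fin.pos_iff_nonempty.mp hd1
  haveI : Nonempty (Fin d2) := Fin.pos_iff_nonempty.mp hd2
  have hne1 : (Finset.univ : Finset (Fin d1)).Nonempty := Finset.univ_nonempty
  have hne2 : (Finset.univ : Finset (Fin d2)).Nonempty := Finset.univ_nonempty
  obtain ⟨hpS, hVI⟩ := hp
  set xp := normPart (xPart p) with hxp
  set yp := normPart (yPart p) with hyp
  have hxpm : xp ∈ simplexSet d1 := normPart_mem_simplex hpS.1
  have hypm : yp ∈ simplexSet d2 := normPart_mem_simplex hpS.2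
  have hkey : ∀ x' ∈ simplexSet d1, ∀ y' ∈ simplexSet d2,
      payoff A xp y' ≤ payoff A x' yp := by
    intro x' hx' y' hy'
    have hmem : joinPt x' y' ∈ ZgeSet d1 d2 :=
      ⟨by rw [xPart_joinPt]; exact simplex_subset_clipped hx',
       by rw [yPart_joinPt]; exact simplex_subset_clipped hy'⟩
    have h := hVI _ hmem
    rw [inner_sub_right, inner_Fop_self A hpS, inner_Fop_joinPt A p hx'.2 hy'.2] at h
    linarith
  refine ⟨hxpm, hypm, ?_⟩
  rw [dualGap, maxPay_eq_sup' hd2, minPay_eq_inf' hd1]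
  have hle : Finset.univ.sup' hne2 (fun j => mvT A xp j)
      ≤ Finset.univ.inf' hne1 (fun i => mv A yp i) := by
    apply Finset.sup'_le
    intro j _
    apply Finset.le_inf'
    intro i _
    rw [← payoff_single_right, ← payoff_single_left]
    exact hkey _ (single_mem_simplex i) _ (single_mem_simplex j)
  have hge : Finset.univ.inf' hne1 (fun i => mv A yp i)
      ≤ Finset.univ.sup' hne2 (fun j => mvT A xp j) := by
    calc Finset.univ.inf' hne1 (fun i => mv A yp i)
        ≤ payoff A xp yp := inf'_le_payoff hne1 A yp hxpm
      _ ≤ Finset.univ.sup' hne2 (fun j => mvT A xp j) := payoff_le_sup' hne2 A xp hypm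
  linarith

set_option maxHeartbeats 3200000 in
theorem exrmp_limit_points' {d1 d2 : ℕ} (hd1 : 1 ≤ d1) (hd2 : 1 ≤ d2)
    (A : Matrix (Fin d1) (Fin d2) ℝ) (η : ℝ) (hη0 : 0 < η) (hη1 : η < 1 / LF A)
    (z zh : ℕ → Joint d1 d2) (hEx : ExRM A η z zh) :
    Tendsto (fun t => ‖z t - z (t + 1)‖) atTop (𝓝 0) ∧
    (∀ p, IsLimitPoint z p →
      p ∈ SolSet A ∧ IsNash A (normPart (xPart p)) (normPart (yPart p))) ∧
    Tendsto (fun t => dualGap A (normPart (xPart (z t))) (normPart (yPart (z t))))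
      atTop (𝓝 0) := by
  obtain ⟨hz0, hzh, hzs⟩ := hEx
  have hconv : Convex ℝ (ZgeSet d1 d2) := convex_ZgeSet
  have hcl : IsClosed (ZgeSet d1 d2) := isClosed_ZgeSet
  have hne : (ZgeSet d1 d2).Nonempty := nonempty_ZgeSet hd1 hd2
  set L := LF A with hLdef
  have hLnn : 0 ≤ L := by
    rw [hLdef, LF]
    have h1 : (0:ℝ) ≤ max (d1:ℝ) (d2:ℝ) := le_trans (by positivity) (le_max_left _ _)
    exact mul_nonneg (mul_nonneg (Real.sqrt_nonneg 6) (opNorm_nonneg A)) h1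
  have hL : 0 < L := by
    rcases eq_or_lt_of_le hLnn with h | h
    · exfalso
      rw [← h] at hη1
      simp at hη1
      linarith
    · exact h
  have hηL : η * L < 1 := by
    rw [lt_div_iff₀ hL] at hη1
    exact hη1
  have hηLnn : 0 ≤ η * L := mul_nonneg hη0.le hLnn
  -- iterates stay feasible
  have hzS : ∀ t, z t ∈ ZgeSet d1 d2 := by
    intro t
    induction t with
    | zero => exact Zset_subset_ZgeSet hz0
    | succ n _ => rw [hzs n]; exact projOn_mem hconv hcl hne _
  have hzhS : ∀ t, zh t ∈ ZgeSet d1 d2 := fun t => by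
    rw [hzh t]; exact projOn_mem hconv hcl hne _
  -- saddle point
  obtain ⟨xs, hxs, ys, hys, hsad1, hsad2⟩ := exists_saddle hd1 hd2 A
  set zstar := joinPt xs ys with hzstar
  have hzstarS : zstar ∈ ZgeSet d1 d2 :=
    ⟨by rw [hzstar, xPart_joinPt]; exact simplex_subset_clipped hxs,
     by rw [hzstar, yPart_joinPt]; exact simplex_subset_clipped hys⟩
  -- one-step inequality
  have key : ∀ t, ‖z (t+1) - zstar‖ ^ 2
      ≤ ‖z t - zstar‖ ^ 2 - (1 - (η*L)^2) * ‖z t - zh t‖ ^ 2 := by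
    intro t
    set u := z t with hu
    set w := zh t with hw
    set u' := z (t+1) with hu'
    set Fu := Fop A u with hFu
    set Fw := Fop A w with hFw
    have hproj2 : ⟪(u - η • Fw) - u', zstar - u'⟫ ≤ 0 := by
      have h := projOn_inner_le hconv hcl hne (u - η • Fw) zstar hzstarS
      rw [hu', hzs t]
      exact h
    have hproj1 : ⟪(u - η • Fu) - w, u' - w⟫ ≤ 0 := by
      have h := projOn_inner_le hconv hcl hne (u - η • Fu) u' (hzS (t+1))
      rw [hw, hzh t]
      exact h
    have hminty : 0 ≤ ⟪Fw, w - zstar⟫ := minty A (hzhS t) hxs hys hsad1 hsad2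
    have hlip : ‖Fw - Fu‖ ≤ L * ‖u - w‖ := by
      calc ‖Fw - Fu‖ ≤ LF A * ‖w - u‖ := Fop_lipschitz hd1 hd2 A (hzhS t) (hzS t)
        _ = L * ‖u - w‖ := by rw [← hLdef, norm_sub_rev]
    -- expansions
    have e1 : ‖u - zstar‖ ^ 2
        = ‖u - u'‖ ^ 2 + 2 * ⟪u - u', u' - zstar⟫ + ‖u' - zstar‖ ^ 2 := by
      have h : u - zstar = (u - u') + (u' - zstar) := by abel
      rw [h, norm_add_sq_real]
    have e2 : ‖u - u'‖ ^ 2 = ‖u - w‖ ^ 2 + 2 * ⟪u - w, w - u'⟫ + ‖w - u'‖ ^ 2 := by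
      have h : u - u' = (u - w) + (w - u') := by abel
      rw [h, norm_add_sq_real]
    have i1 : η * ⟪Fw, u' - zstar⟫ ≤ ⟪u - u', u' - zstar⟫ := by
      have hexp : (u - η • Fw) - u' = (u - u') - η • Fw := by abel
      rw [hexp, inner_sub_left, real_inner_smul_left] at hproj2
      have hneg : ⟪u - u', zstar - u'⟫ = -⟪u - u', u' - zstar⟫ := by
        rw [← inner_neg_right]; congr 1; abel
      have hneg2 : ⟪Fw, zstar - u'⟫ = -⟪Fw, u' - zstar⟫ := by
        rw [← inner_neg_right]; congr 1; abel
      rw [hneg, hneg2] at hproj2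
      linarith
    have i2 : ⟪u - w, u' - w⟫ ≤ η * ⟪Fu, u' - w⟫ := by
      have hexp : (u - η • Fu) - w = (u - w) - η • Fu := by abel
      rw [hexp, inner_sub_left, real_inner_smul_left] at hproj1
      linarith
    have i3 : ⟪Fw, u' - zstar⟫ = ⟪Fw, u' - w⟫ + ⟪Fw, w - zstar⟫ := by
      rw [← inner_add_right]; congr 1; abel
    have i4 : ⟪Fw, u' - w⟫ = ⟪Fu, u' - w⟫ + ⟪Fw - Fu, u' - w⟫ := by
      rw [← inner_add_left]; congr 1; abel
    have hP67 : ⟪u - w, u' - w⟫ = -⟪u - w, w - u'⟫ := by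
      rw [← inner_neg_right]; congr 1; abel
    have cs : -(L * ‖u - w‖ * ‖u' - w‖) ≤ ⟪Fw - Fu, u' - w⟫ := by
      have h1 : |⟪Fw - Fu, u' - w⟫| ≤ ‖Fw - Fu‖ * ‖u' - w‖ := abs_real_inner_le_norm _ _
      have h2 : ‖Fw - Fu‖ * ‖u' - w‖ ≤ L * ‖u - w‖ * ‖u' - w‖ :=
        mul_le_mul_of_nonneg_right hlip (norm_nonneg _)
      have := (abs_le.mp h1).1
      linarith
    have amgm : 2 * (η * (L * ‖u - w‖ * ‖u' - w‖))
        ≤ (η*L)^2 * ‖u - w‖ ^ 2 + ‖u' - w‖ ^ 2 := by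
      nlinarith [sq_nonneg (η * L * ‖u - w‖ - ‖u' - w‖)]
    have hmul1 : η * ⟪Fw, u' - w⟫ ≤ η * ⟪Fw, u' - zstar⟫ := by
      apply mul_le_mul_of_nonneg_left _ hη0.le
      rw [i3]
      linarith
    have hmul2 : η * ⟪Fw, u' - w⟫ = η * ⟪Fu, u' - w⟫ + η * ⟪Fw - Fu, u' - w⟫ := by
      rw [i4]; ring
    have hmul3 : -(η * (L * ‖u - w‖ * ‖u' - w‖)) ≤ η * ⟪Fw - Fu, u' - w⟫ := by
      have := mul_le_mul_of_nonneg_left cs hη0.le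
      linarith [this]
    have hsymm : ‖w - u'‖ = ‖u' - w‖ := norm_sub_rev _ _
    have hsymm2 : ‖w - u'‖ ^ 2 = ‖u' - w‖ ^ 2 := by rw [hsymm]
    nlinarith [e1, e2, i1, i2, hmul1, hmul2, hmul3, amgm, hsymm2]
  set c := 1 - (η*L)^2 with hc
  have hcpos : 0 < c := by
    rw [hc]
    nlinarith [hηLnn, hηL]
  -- telescoping
  have htel : ∀ n, (∑ t ∈ Finset.range n, c * ‖z t - zh t‖ ^ 2)
      + ‖z n - zstar‖ ^ 2 ≤ ‖z 0 - zstar‖ ^ 2 := by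
    intro n
    induction n with
    | zero => simp
    | succ m ih =>
      rw [Finset.sum_range_succ]
      have hk := key m
      have : c * ‖z m - zh m‖ ^ 2 + ‖z (m+1) - zstar‖ ^ 2 ≤ ‖z m - zstar‖ ^ 2 := by
        rw [hc]; nlinarith [hk]
      linarith
  have hsummable : Summable (fun t => c * ‖z t - zh t‖ ^ 2) := by
    apply summable_of_sum_range_le (c := ‖z 0 - zstar‖ ^ 2)
    · intro t
      positivity
    · intro n
      have := htel n
      nlinarith [sq_nonneg ‖z n - zstar‖]
  have haz2 : Tendsto (fun t => ‖z t - zh t‖ ^ 2) atTop (𝓝 0) := by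
    have h1 := hsummable.tendsto_atTop_zero
    have h2 := h1.const_mul c⁻¹
    simp only [mul_zero] at h2
    have h3 : (fun t => c⁻¹ * (c * ‖z t - zh t‖ ^ 2)) = fun t => ‖z t - zh t‖ ^ 2 := by
      funext t
      field_simp
    rwa [h3] at h2
  have haz : Tendsto (fun t => ‖z t - zh t‖) atTop (𝓝 0) := by
    have h1 := (Real.continuous_sqrt.tendsto 0).comp haz2
    rw [Real.sqrt_zero] at h1
    have h2 : ((fun x => Real.sqrt x) ∘ fun t => ‖z t - zh t‖ ^ 2)
        = fun t => ‖z t - zh t‖ := by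
      funext t
      show Real.sqrt (‖z t - zh t‖ ^ 2) = ‖z t - zh t‖
      exact Real.sqrt_sq (norm_nonneg _)
    rwa [h2] at h1
  -- statement 1
  have hhalfproj : ∀ t, ‖zh t - z (t+1)‖ ≤ η * L * ‖z t - zh t‖ := by
    intro t
    have hb := projOn_nonexpansive hconv hcl hne
      (z t - η • Fop A (z t)) (z t - η • Fop A (zh t))
    rw [← hzh t, ← hzs t] at hb
    calc ‖zh t - z (t+1)‖
        ≤ ‖(z t - η • Fop A (z t)) - (z t - η • Fop A (zh t))‖ := hb
      _ = ‖η • (Fop A (zh t) - Fop A (z t))‖ := by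
          congr 1
          rw [smul_sub]
          abel
      _ = η * ‖Fop A (zh t) - Fop A (z t)‖ := by
          rw [norm_smul, Real.norm_eq_abs, abs_of_nonneg hη0.le]
      _ ≤ η * (L * ‖zh t - z t‖) := by
          apply mul_le_mul_of_nonneg_left _ hη0.le
          have := Fop_lipschitz hd1 hd2 A (hzhS t) (hzS t)
          rw [← hLdef] at this
          exact this
      _ = η * L * ‖z t - zh t‖ := by rw [norm_sub_rev]; ring
  have hstmt1 : Tendsto (fun t => ‖z t - z (t + 1)‖) atTop (𝓝 0) := by
    apply squeeze_zero (fun t => norm_nonneg _)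
      (g := fun t => (1 + η * L) * ‖z t - zh t‖)
    · intro t
      calc ‖z t - z (t+1)‖ = ‖(z t - zh t) + (zh t - z (t+1))‖ := by
            congr 1; abel
        _ ≤ ‖z t - zh t‖ + ‖zh t - z (t+1)‖ := norm_add_le _ _
        _ ≤ ‖z t - zh t‖ + η * L * ‖z t - zh t‖ := by
            linarith [hhalfproj t]
        _ = (1 + η * L) * ‖z t - zh t‖ := by ring
    · have := haz.const_mul (1 + η * L)
      simpa using this
  -- core limit-point argument
  have hcore : ∀ (ψ : ℕ → ℕ), Tendsto ψ atTop atTop →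
      ∀ p, Tendsto (fun n => z (ψ n)) atTop (𝓝 p) → p ∈ SolSet A := by
    intro ψ hψ p hp
    have hpS : p ∈ ZgeSet d1 d2 :=
      hcl.mem_of_tendsto hp (Filter.Eventually.of_forall fun n => hzS _)
    -- zh ∘ ψ also tends to p
    have hazψ : Tendsto (fun n => ‖z (ψ n) - zh (ψ n)‖) atTop (𝓝 0) := haz.comp hψ
    have hvec : Tendsto (fun n => zh (ψ n) - z (ψ n)) atTop (𝓝 0) := by
      rw [tendsto_zero_iff_norm_tendsto_zero]
      have h : (fun n => ‖zh (ψ n) - z (ψ n)‖) = fun n => ‖z (ψ n) - zh (ψ n)‖ := by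
        funext n; rw [norm_sub_rev]
      rw [h]
      exact hazψ
    have hzhp : Tendsto (fun n => zh (ψ n)) atTop (𝓝 p) := by
      have := hp.add hvec
      simp only [add_zero] at this
      have h : (fun n => z (ψ n) + (zh (ψ n) - z (ψ n))) = fun n => zh (ψ n) := by
        funext n; abel
      rwa [h] at this
    -- continuity of the update map along the sequence
    have hTp : Tendsto (fun n => projOn (ZgeSet d1 d2) (z (ψ n) - η • Fop A (z (ψ n))))
        atTop (𝓝 (projOn (ZgeSet d1 d2) (p - η • Fop A p))) := by
      rw [tendsto_iff_dist_tendsto_zero]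
      apply squeeze_zero (fun n => dist_nonneg)
        (g := fun n => (1 + η * L) * dist (z (ψ n)) p)
      · intro n
        rw [dist_eq_norm, dist_eq_norm]
        calc ‖projOn (ZgeSet d1 d2) (z (ψ n) - η • Fop A (z (ψ n)))
              - projOn (ZgeSet d1 d2) (p - η • Fop A p)‖
            ≤ ‖(z (ψ n) - η • Fop A (z (ψ n))) - (p - η • Fop A p)‖ :=
              projOn_nonexpansive hconv hcl hne _ _
          _ = ‖(z (ψ n) - p) - η • (Fop A (z (ψ n)) - Fop A p)‖ := by
              congr 1
              rw [smul_sub]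
              abel
          _ ≤ ‖z (ψ n) - p‖ + ‖η • (Fop A (z (ψ n)) - Fop A p)‖ := norm_sub_le _ _
          _ ≤ ‖z (ψ n) - p‖ + η * (L * ‖z (ψ n) - p‖) := by
              apply add_le_add_right
              rw [norm_smul, Real.norm_eq_abs, abs_of_nonneg hη0.le]
              apply mul_le_mul_of_nonneg_left _ hη0.le
              have := Fop_lipschitz hd1 hd2 A (hzS (ψ n)) hpS
              rw [← hLdef] at this
              exact this
          _ = (1 + η * L) * ‖z (ψ n) - p‖ := by ring
      · have hd : Tendsto (fun n => dist (z (ψ n)) p) atTop (𝓝 0) :=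
          tendsto_iff_dist_tendsto_zero.mp hp
        have := hd.const_mul (1 + η * L)
        simpa using this
    have hfixseq : (fun n => projOn (ZgeSet d1 d2) (z (ψ n) - η • Fop A (z (ψ n))))
        = fun n => zh (ψ n) := by
      funext n
      rw [hzh (ψ n)]
    rw [hfixseq] at hTp
    have hfix : p = projOn (ZgeSet d1 d2) (p - η • Fop A p) :=
      tendsto_nhds_unique hzhp hTp
    refine ⟨hpS, ?_⟩
    intro z' hz'
    have h := projOn_inner_le hconv hcl hne (p - η • Fop A p) z' hz'
    rw [← hfix] at h
    have hexp : (p - η • Fop A p) - p = -(η • Fop A p) := by abel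
    rw [hexp, inner_neg_left, real_inner_smul_left] at h
    have h2 : 0 ≤ ⟪Fop A p, z' - p⟫ := by
      by_contra hcon
      push_neg at hcon
      nlinarith
    have h3 : ⟪Fop A p, p - z'⟫ = -⟪Fop A p, z' - p⟫ := by
      rw [← inner_neg_right]; congr 1; abel
    linarith [h3, h2]
  -- statement 2
  have hstmt2 : ∀ p, IsLimitPoint z p →
      p ∈ SolSet A ∧ IsNash A (normPart (xPart p)) (normPart (yPart p)) := by
    rintro p ⟨φ, hφmono, hφtend⟩
    have hsol : p ∈ SolSet A := hcore φ hφmono.tendsto_atTop p hφtend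
    exact ⟨hsol, sol_isNash hd1 hd2 A hsol⟩
  -- statement 3
  have hDbound : ∀ t, ‖z t - zstar‖ ≤ ‖z 0 - zstar‖ := by
    have hsq : ∀ t, ‖z t - zstar‖ ^ 2 ≤ ‖z 0 - zstar‖ ^ 2 := by
      intro t
      have := htel t
      have hsum : 0 ≤ ∑ s ∈ Finset.range t, c * ‖z s - zh s‖ ^ 2 :=
        Finset.sum_nonneg fun s _ => by positivity
      linarith
    intro t
    nlinarith [hsq t, norm_nonneg (z t - zstar), norm_nonneg (z 0 - zstar)]
  have hKcomp : IsCompact (Metric.closedBall zstar ‖z 0 - zstar‖ ∩ ZgeSet d1 d2) :=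
    (isCompact_closedBall _ _).inter_right hcl
  have hKmem : ∀ t, z t ∈ Metric.closedBall zstar ‖z 0 - zstar‖ ∩ ZgeSet d1 d2 := by
    intro t
    refine ⟨?_, hzS t⟩
    rw [Metric.mem_closedBall, dist_eq_norm]
    exact hDbound t
  have hstmt3 : Tendsto (fun t => dualGap A (normPart (xPart (z t))) (normPart (yPart (z t))))
      atTop (𝓝 0) := by
    apply tendsto_of_subseq_tendsto
    intro ns hns
    obtain ⟨p, hpK, σ, hσmono, hσtend⟩ := hKcomp.tendsto_subseq (fun n => hKmem (ns n))
    have hψ : Tendsto (fun n => ns (σ n)) atTop atTop := hns.comp hσmono.tendsto_atTop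
    have hptend : Tendsto (fun n => z (ns (σ n))) atTop (𝓝 p) := hσtend
    have hsol : p ∈ SolSet A := hcore _ hψ p hptend
    have hpS : p ∈ ZgeSet d1 d2 := hsol.1
    have hnashp := sol_isNash hd1 hd2 A hsol
    have hgap0 : dualGap A (normPart (xPart p)) (normPart (yPart p)) = 0 := hnashp.2.2
    refine ⟨σ, ?_⟩
    apply squeeze_zero_norm
      (a := fun n => (opNorm A * Real.sqrt d1 + opNorm A * Real.sqrt d2) * ‖z (ns (σ n)) - p‖)
    · intro n
      have hzn := hzS (ns (σ n))
      have hlipgap := dualGap_lipschitz hd1 hd2 A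
        (normPart (xPart (z (ns (σ n))))) (normPart (xPart p))
        (normPart (yPart (z (ns (σ n))))) (normPart (yPart p))
      have hx : ‖normPart (xPart (z (ns (σ n)))) - normPart (xPart p)‖
          ≤ Real.sqrt d1 * ‖z (ns (σ n)) - p‖ := by
        calc ‖normPart (xPart (z (ns (σ n)))) - normPart (xPart p)‖
            ≤ Real.sqrt d1 * ‖xPart (z (ns (σ n))) - xPart p‖ :=
              normPart_lipschitz hd1 hzn.1 hpS.1
          _ = Real.sqrt d1 * ‖xPart (z (ns (σ n)) - p)‖ := by rw [xPart_sub]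
          _ ≤ Real.sqrt d1 * ‖z (ns (σ n)) - p‖ :=
              mul_le_mul_of_nonneg_left (norm_xPart_le _) (Real.sqrt_nonneg _)
      have hy : ‖normPart (yPart (z (ns (σ n)))) - normPart (yPart p)‖
          ≤ Real.sqrt d2 * ‖z (ns (σ n)) - p‖ := by
        calc ‖normPart (yPart (z (ns (σ n)))) - normPart (yPart p)‖
            ≤ Real.sqrt d2 * ‖yPart (z (ns (σ n))) - yPart p‖ :=
              normPart_lipschitz hd2 hzn.2 hpS.2
          _ = Real.sqrt d2 * ‖yPart (z (ns (σ n)) - p)‖ := by rw [yPart_sub]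
          _ ≤ Real.sqrt d2 * ‖z (ns (σ n)) - p‖ :=
              mul_le_mul_of_nonneg_left (norm_yPart_le _) (Real.sqrt_nonneg _)
      have hαn := opNorm_nonneg A
      calc ‖dualGap A (normPart (xPart (z (ns (σ n))))) (normPart (yPart (z (ns (σ n)))))‖
          = |dualGap A (normPart (xPart (z (ns (σ n))))) (normPart (yPart (z (ns (σ n)))))
              - dualGap A (normPart (xPart p)) (normPart (yPart p))| := by
            rw [hgap0, sub_zero, Real.norm_eq_abs]
        _ ≤ opNorm A * ‖normPart (xPart (z (ns (σ n)))) - normPart (xPart p)‖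
            + opNorm A * ‖normPart (yPart (z (ns (σ n)))) - normPart (yPart p)‖ := hlipgap
        _ ≤ opNorm A * (Real.sqrt d1 * ‖z (ns (σ n)) - p‖)
            + opNorm A * (Real.sqrt d2 * ‖z (ns (σ n)) - p‖) := by
            apply add_le_add <;> exact mul_le_mul_of_nonneg_left (by assumption) hαn
        _ = (opNorm A * Real.sqrt d1 + opNorm A * Real.sqrt d2) * ‖z (ns (σ n)) - p‖ := by
            ring
    · have hd : Tendsto (fun n => ‖z (ns (σ n)) - p‖) atTop (𝓝 0) := by
        have := tendsto_iff_dist_tendsto_zero.mp hptend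
        simpa [dist_eq_norm] using this
      have := hd.const_mul (opNorm A * Real.sqrt d1 + opNorm A * Real.sqrt d2)
      simpa using this
  exact ⟨hstmt1, hstmt2, hstmt3⟩

end MainProof

/-- For ExRM⁺: successive differences vanish, every limit point solves the
VI (hence induces a Nash equilibrium), and the duality gap of g(zᵗ) tends to 0. -/
theorem exrmp_limit_points {d1 d2 : ℕ} (hd1 : 1 ≤ d1) (hd2 : 1 ≤ d2)
    (A : Matrix (Fin d1) (Fin d2) ℝ) (η : ℝ) (hη0 : 0 < η) (hη1 : η < 1 / LF A)
    (z zh : ℕ → Joint d1 d2) (hEx : ExRM A η z zh) :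
    Tendsto (fun t => ‖z t - z (t + 1)‖) atTop (𝓝 0) ∧
    (∀ p, IsLimitPoint z p →
      p ∈ SolSet A ∧ IsNash A (normPart (xPart p)) (normPart (yPart p))) ∧
    Tendsto (fun t => dualGap A (normPart (xPart (z t))) (normPart (yPart (z t))))
      atTop (𝓝 0) := by
  exact exrmp_limit_points' hd1 hd2 A η hη0 hη1 z zh hEx

end
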